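/- arXiv:1208.3271 — 8 statements merged into one kernel-verified Lean document; each statement's English description precedes it below -/
import Mathlib

section
/- Let m be a positive integer, let e_1, …, e_m denote the standard basis of ℝ^m, and let Δ₀ ⊂ ℝ^m be the convex hull of the points e_1, …, e_m and −(e_1 + ⋯ + e_m). Then for every q = (q_1, …, q_m) ∈ ℝ^m, the Minkowski gauge of Δ₀ satisfies gauge Δ₀ q = (q_1 + ⋯ + q_m) − (m+1)·min(0, q_1, …, q_m). -/
open Finset Set

private lemma simplex_halfspaces (m : ℕ) :
    convexHull ℝ ((Set.range fun i : Fin m => (Pi.single i 1 : Fin m → ℝ)) ∪ {fun _ => -1})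
      = {x : Fin m → ℝ |
          (∑ i, x i) ≤ 1 ∧ ∀ j, (∑ i, x i) - ((m : ℝ) + 1) * x j ≤ 1} := by
  have hm1 : (0 : ℝ) < (m : ℝ) + 1 := by positivity
  apply le_antisymm
  · apply convexHull_min
    · rintro x (⟨i, rfl⟩ | rfl)
      · refine ⟨by simp, fun j => ?_⟩
        have h1 : (∑ k, (Pi.single i 1 : Fin m → ℝ) k) = 1 := by simp
        rw [h1]
        have : (0 : ℝ) ≤ (Pi.single i 1 : Fin m → ℝ) j := by
          rcases eq_or_ne i j with rfl | h
          · simp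
          · simp [Pi.single_apply, h]
        nlinarith
      · refine ⟨?_, fun j => ?_⟩
        · simp only [Finset.sum_const, card_univ, Fintype.card_fin, nsmul_eq_mul,
            mul_neg, mul_one]
          linarith [Nat.cast_nonneg (α := ℝ) m]
        · simp only [Finset.sum_const, card_univ, Fintype.card_fin, nsmul_eq_mul,
            mul_neg, mul_one]
          ring_nf
          linarith
    · have h1 : Convex ℝ {x : Fin m → ℝ | (∑ i, x i) ≤ 1} := by
        refine convex_halfSpace_le ⟨fun a b => ?_, fun c a => ?_⟩ 1
        · simp [Finset.sum_add_distrib]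
        · simp [Finset.mul_sum]
      have h2 : ∀ j : Fin m,
          Convex ℝ {x : Fin m → ℝ | (∑ i, x i) - ((m : ℝ) + 1) * x j ≤ 1} := by
        intro j
        refine convex_halfSpace_le ⟨fun a b => ?_, fun c a => ?_⟩ 1
        · simp only [Pi.add_apply, Finset.sum_add_distrib]; ring
        · simp only [Pi.smul_apply, smul_eq_mul]
          rw [mul_sub, Finset.mul_sum]; ring
      have : {x : Fin m → ℝ |
            (∑ i, x i) ≤ 1 ∧ ∀ j, (∑ i, x i) - ((m : ℝ) + 1) * x j ≤ 1}
          = {x : Fin m → ℝ | (∑ i, x i) ≤ 1} ∩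
            ⋂ j, {x : Fin m → ℝ | (∑ i, x i) - ((m : ℝ) + 1) * x j ≤ 1} := by
        ext x; simp [Set.mem_iInter]
      rw [this]
      exact h1.inter (convex_iInter h2)
  · rintro x ⟨hx1, hx2⟩
    set t₀ : ℝ := (1 - ∑ i, x i) / ((m : ℝ) + 1) with ht₀
    have ht₀0 : 0 ≤ t₀ := div_nonneg (by linarith) hm1.le
    have hkey : ((m : ℝ) + 1) * t₀ = 1 - ∑ i, x i := by
      rw [ht₀]; field_simp
    have hxt : ∀ j, 0 ≤ x j + t₀ := by
      intro j
      nlinarith [hx2 j, hkey]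
    -- convex combination
    set w : Option (Fin m) → ℝ := fun o => o.elim t₀ (fun i => x i + t₀) with hw
    set z : Option (Fin m) → (Fin m → ℝ) :=
      fun o => o.elim (fun _ => -1) (fun i => Pi.single i 1) with hz
    have hsum : ∑ o : Option (Fin m), w o = 1 := by
      rw [Fintype.sum_option]
      simp only [hw, Option.elim]
      rw [Finset.sum_add_distrib, Finset.sum_const, card_univ, Fintype.card_fin,
        nsmul_eq_mul]
      rw [ht₀]
      field_simp
      ring
    have hcomb : ∑ o : Option (Fin m), w o • z o = x := by
      funext j
      rw [Fintype.sum_option]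
      simp only [hw, hz, Option.elim, Pi.add_apply, Finset.sum_apply, Pi.smul_apply,
        smul_eq_mul, Pi.single_apply, mul_ite, mul_one, mul_zero, mul_neg]
      rw [Finset.sum_ite_eq Finset.univ j (fun i => x i + t₀)]
      simp
    rw [← hcomb]
    refine (convex_convexHull ℝ _).sum_mem (fun o _ => ?_) hsum (fun o _ => ?_)
    · cases o with
      | none => exact ht₀0
      | some i => exact hxt i
    · cases o with
      | none => exact subset_convexHull ℝ _ (Or.inr rfl)
      | some i => exact subset_convexHull ℝ _ (Or.inl ⟨i, rfl⟩)

/-- The Minkowski gauge of the simplex `Δ₀ = conv{e_1, …, e_m, −(e_1+⋯+e_m)}` is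
`q ↦ (∑ q_i) − (m+1) · min(0, q_1, …, q_m)`. -/
theorem stmt_2 (m : ℕ) (hm : 0 < m)
    (Δ₀ : Set (Fin m → ℝ))
    (hΔ : Δ₀ = convexHull ℝ
      ((Set.range fun i : Fin m => (Pi.single i 1 : Fin m → ℝ)) ∪ {fun _ => -1}))
    (q : Fin m → ℝ) :
    gauge Δ₀ q =
      (∑ i, q i) - ((m : ℝ) + 1) *
        min 0 (Finset.univ.inf' ⟨⟨0, hm⟩, Finset.mem_univ _⟩ q) := by
  classical
  have hm1 : (0 : ℝ) < (m : ℝ) + 1 := by positivity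
  have hne : (Finset.univ : Finset (Fin m)).Nonempty := ⟨⟨0, hm⟩, Finset.mem_univ _⟩
  set μ : ℝ := Finset.univ.inf' hne q with hμ
  set S : ℝ := ∑ i, q i with hS
  set g : ℝ := max S (S - ((m : ℝ) + 1) * μ) with hg
  have hTg : S - ((m : ℝ) + 1) * min 0 μ = g := by
    rcases le_total μ 0 with h | h
    · rw [min_eq_right h, hg, max_eq_right
        (by nlinarith [mul_nonpos_of_nonneg_of_nonpos hm1.le h] :
          S ≤ S - ((m : ℝ) + 1) * μ)]
    · rw [min_eq_left h, hg, max_eq_left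
        (by nlinarith [mul_nonneg hm1.le h] : S - ((m : ℝ) + 1) * μ ≤ S),
        mul_zero, sub_zero]
  have hmμS : (m : ℝ) * μ ≤ S := by
    have : ∑ _i : Fin m, μ ≤ ∑ i, q i :=
      Finset.sum_le_sum fun i _ => Finset.inf'_le q (Finset.mem_univ i)
    simpa using this
  have hg0 : 0 ≤ g := by
    rcases le_total 0 μ with h | h
    · exact le_max_iff.2 (Or.inl (by nlinarith))
    · exact le_max_iff.2 (Or.inr (by nlinarith))
  have hmem : ∀ r : ℝ, 0 < r → (r⁻¹ • q ∈ Δ₀ ↔ g ≤ r) := by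
    intro r hr
    rw [hΔ, simplex_halfspaces m]
    have hr' : r ≠ 0 := hr.ne'
    have hsum : (∑ i, (r⁻¹ • q) i) = r⁻¹ * S := by
      simp [Finset.mul_sum, hS]
    constructor
    · rintro ⟨h1, h2⟩
      rw [hsum] at h1
      have hS_le : S ≤ r := by
        rwa [inv_mul_le_iff₀ hr, mul_one] at h1
      obtain ⟨j, _, hj⟩ := Finset.exists_mem_eq_inf' hne q
      have := h2 j
      rw [hsum] at this
      simp only [Pi.smul_apply, smul_eq_mul] at this
      rw [hg, max_le_iff]
      refine ⟨hS_le, ?_⟩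
      have h3 : r⁻¹ * S - ((m : ℝ) + 1) * (r⁻¹ * q j) ≤ 1 := this
      have h4 : r⁻¹ * (S - ((m : ℝ) + 1) * μ) ≤ 1 := by
        rw [hμ, hj]; ring_nf; ring_nf at h3; linarith
      rw [inv_mul_le_iff₀ hr, mul_one] at h4
      linarith
    · intro hgr
      rw [hg, max_le_iff] at hgr
      obtain ⟨h1, h2⟩ := hgr
      refine ⟨?_, fun j => ?_⟩
      · rw [hsum, inv_mul_le_iff₀ hr, mul_one]; exact h1
      · rw [hsum]
        simp only [Pi.smul_apply, smul_eq_mul]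
        have hjμ : μ ≤ q j := Finset.inf'_le q (Finset.mem_univ j)
        have : S - ((m : ℝ) + 1) * q j ≤ r := by nlinarith
        have h5 : r⁻¹ * (S - ((m : ℝ) + 1) * q j) ≤ 1 := by
          rw [inv_mul_le_iff₀ hr, mul_one]; exact this
        ring_nf; ring_nf at h5; linarith
  rw [gauge_def', hTg]
  have hset : {r ∈ Set.Ioi (0 : ℝ) | r⁻¹ • q ∈ Δ₀}
      = if g = 0 then Set.Ioi (0 : ℝ) else Set.Ici g := by
    rcases eq_or_lt_of_le hg0 with h0 | h0
    · rw [if_pos h0.symm]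
      ext r
      simp only [Set.mem_setOf_eq, Set.mem_Ioi]
      exact ⟨fun ⟨h, _⟩ => h, fun h => ⟨h, (hmem r h).2 (by rw [← h0]; exact h.le)⟩⟩
    · rw [if_neg h0.ne']
      ext r
      simp only [Set.mem_setOf_eq, Set.mem_Ioi, Set.mem_Ici]
      constructor
      · rintro ⟨hr, hrs⟩; exact (hmem r hr).1 hrs
      · intro hgr
        have hr : 0 < r := lt_of_lt_of_le h0 hgr
        exact ⟨hr, (hmem r hr).2 hgr⟩
  rw [hset]
  split_ifs with h0
  · rw [csInf_Ioi, h0]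
  · exact csInf_Ici
end

section
/- Let m be a positive integer and let Δ₀ ⊂ ℝ^m be the convex hull of the standard basis vectors e_1, …, e_m and −(e_1 + ⋯ + e_m). Then for every q = (q_1, …, q_m) ∈ ℝ^m one has gauge Δ₀ q ≤ (2m − 1)·max_{1 ≤ i ≤ m} |q_i|. -/
/-!
Let `b = max 0 (-min_i q_i)`. Then `q = ∑ (q_i + b) e_i + b · (-𝟙)` is a nonnegative combination
of vertices of `Δ₀`, so `gauge Δ₀ q ≤ ∑ q_i + (m + 1) b`. Splitting off the smallest coordinate,
`q_{i₀} + (m + 1) b ≤ m |q_{i₀}|` and the other `m - 1` coordinates contribute at most `max |q_i|` each.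
-/

open Finset

theorem gauge_sum_smul_le {E ι : Type*} [AddCommGroup E] [Module ℝ E] {s : Set E}
    (hs : Convex ℝ s) (t : Finset ι) {w : ι → ℝ} {z : ι → E}
    (hw : ∀ i ∈ t, 0 ≤ w i) (hz : ∀ i ∈ t, z i ∈ s) :
    gauge s (∑ i ∈ t, w i • z i) ≤ ∑ i ∈ t, w i := by
  rcases (sum_nonneg hw).eq_or_lt with hW | hW
  · have hw0 : ∀ i ∈ t, w i = 0 := (sum_eq_zero_iff_of_nonneg hw).mp hW.symm
    rw [sum_eq_zero fun i hi => by rw [hw0 i hi, zero_smul], gauge_zero, ← hW]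
  · refine gauge_le_of_mem hW.le ⟨t.centerMass w z, hs.centerMass_mem hw hW hz, ?_⟩
    exact smul_inv_smul₀ hW.ne' _

theorem gauge_convexHull_single_neg_one_le {m : ℕ} {c : Fin m → ℝ} {b : ℝ}
    (hc : ∀ i, 0 ≤ c i) (hb : 0 ≤ b) :
    gauge (convexHull ℝ
      ((Set.range fun i : Fin m => (Pi.single i 1 : Fin m → ℝ)) ∪ {fun _ => -1}))
      (fun j => c j - b) ≤ ∑ i, c i + b := by
  classical
  let w : Option (Fin m) → ℝ := fun o => o.elim b c
  let z : Option (Fin m) → Fin m → ℝ := fun o => o.elim (fun _ => -1) fun i => Pi.single i 1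
  have hsum : ∑ o, w o • z o = fun j => c j - b := by
    rw [Fintype.sum_option]
    simp only [w, z, Option.elim, ← pi_eq_sum_univ' c]
    ext j; simp [sub_eq_neg_add]
  have hweight : ∑ o, w o = ∑ i, c i + b := by
    rw [Fintype.sum_option, add_comm]; rfl
  rw [← hsum, ← hweight]
  refine gauge_sum_smul_le (convex_convexHull ℝ _) _ (fun o _ => ?_) (fun o _ => ?_)
  · cases o
    exacts [hb, hc _]
  · apply subset_convexHull
    cases o
    exacts [Or.inr rfl, Or.inl ⟨_, rfl⟩]

theorem add_mul_max_zero_neg_le (x : ℝ) {n : ℝ} (hn : 1 ≤ n) :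
    x + (n + 1) * max 0 (-x) ≤ n * |x| := by
  rcases le_total 0 x with hx | hx
  · rw [max_eq_left (neg_nonpos.mpr hx), abs_of_nonneg hx]; nlinarith
  · rw [max_eq_right (neg_nonneg.mpr hx), abs_of_nonpos hx]; linarith

/-- For the simplex `Δ₀ = conv{e_1, …, e_m, −(e_1+⋯+e_m)}` one has
`gauge Δ₀ q ≤ (2m−1) · max_i |q_i|`. -/
theorem stmt_3 (m : ℕ) (hm : 0 < m)
    (Δ₀ : Set (Fin m → ℝ))
    (hΔ : Δ₀ = convexHull ℝ
      ((Set.range fun i : Fin m => (Pi.single i 1 : Fin m → ℝ)) ∪ {fun _ => -1}))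
    (q : Fin m → ℝ) :
    gauge Δ₀ q ≤
      (2 * (m : ℝ) - 1) * Finset.univ.sup' ⟨⟨0, hm⟩, Finset.mem_univ _⟩ (fun i => |q i|) := by
  set M := Finset.univ.sup' ⟨⟨0, hm⟩, Finset.mem_univ _⟩ (fun i => |q i|)
  have hqM : ∀ i, q i ≤ M := fun i => (le_abs_self _).trans (le_sup' (fun i => |q i|) (mem_univ i))
  obtain ⟨i₀, -, hi₀⟩ := exists_min_image univ q ⟨⟨0, hm⟩, mem_univ _⟩
  set b := max 0 (-q i₀)
  have hm1 : (1 : ℝ) ≤ m := by exact_mod_cast hm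
  have hrest : ∑ i ∈ univ.erase i₀, q i ≤ ((m : ℝ) - 1) * M := by
    calc ∑ i ∈ univ.erase i₀, q i ≤ ∑ i ∈ univ.erase i₀, M := sum_le_sum fun i _ => hqM i
      _ = ((m : ℝ) - 1) * M := by simp [card_erase_of_mem, Nat.cast_sub hm]
  have hi₀M : (m : ℝ) * |q i₀| ≤ m * M := by gcongr; exact le_sup' (fun i => |q i|) (mem_univ i₀)
  calc gauge Δ₀ q = gauge Δ₀ (fun j => (q j + b) - b) := by simp
    _ ≤ ∑ i, (q i + b) + b := by
        rw [hΔ]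
        exact gauge_convexHull_single_neg_one_le
          (fun i => by linarith [hi₀ i (mem_univ i), le_max_right 0 (-q i₀)]) (le_max_left _ _)
    _ = ∑ i ∈ univ.erase i₀, q i + (q i₀ + ((m : ℝ) + 1) * b) := by
        rw [sum_add_distrib, ← sum_erase_add _ _ (mem_univ i₀)]
        simp only [mem_univ, sum_erase_eq_sub, sub_add_cancel, sum_const, card_univ,
          Fintype.card_fin, nsmul_eq_mul]
        ring
    _ ≤ (2 * (m : ℝ) - 1) * M := by linarith [add_mul_max_zero_neg_le (q i₀) hm1]
end

section
/- Let m, n be positive integers and ε > 0 a real number, and set δ = (ε/(2m))^{m+1}. Let Δ₀ ⊂ ℝ^m be the convex hull of the standard basis vectors e_1, …, e_m and −(e_1 + ⋯ + e_m), and let N be an additive subgroup of ℝ^m × ℝ^n containing ℤ^{m+n}. Assume that every nonzero element (q, y) ∈ N with y_l ≥ 0 for all l ∈ {1, …, n} satisfies gauge Δ₀ q + Σ_{l=1}^n y_l > ε. Then every nonzero element A ∈ π(N) with A_l ≥ 0 for all l satisfies Σ_{l=1}^n A_l > δ, where π : ℝ^m × ℝ^n → ℝ^n is the projection to the last n coordinates.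 -/
open Finset Pointwise

/-- If two reals have the same floor, they differ by less than 1. -/
private lemma abs_sub_lt_one_of_floor_eq {x y : ℝ} (h : ⌊x⌋ = ⌊y⌋) : |x - y| < 1 := by
  have hx1 := Int.floor_le x
  have hx2 := Int.lt_floor_add_one x
  have hy1 := Int.floor_le y
  have hy2 := Int.lt_floor_add_one y
  have hc : ((⌊x⌋ : ℤ) : ℝ) = ((⌊y⌋ : ℤ) : ℝ) := by exact_mod_cast h
  rw [abs_sub_lt_iff]
  constructor <;> linarith

/-- Simultaneous Dirichlet-type pigeonhole: some multiple `k ≤ M^m` of `q` is within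
`1/M` of an integer vector in every coordinate. -/
private lemma pigeon (m M : ℕ) (hM : 1 ≤ M) (q : Fin m → ℝ) :
    ∃ (k : ℕ) (a : Fin m → ℤ), 1 ≤ k ∧ k ≤ M ^ m ∧
      ∀ i, |(k : ℝ) * q i - (a i : ℝ)| ≤ 1 / (M : ℝ) := by
  have hM' : (0 : ℝ) < (M : ℝ) := by exact_mod_cast hM
  have hFlt : ∀ (k : Fin (M ^ m + 1)) (i : Fin m),
      (⌊Int.fract ((k : ℕ) * q i) * (M : ℝ)⌋).toNat < M := by
    intro k i
    have h0 : (0 : ℝ) ≤ Int.fract (((k : ℕ) : ℝ) * q i) := Int.fract_nonneg _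
    have h1 : Int.fract (((k : ℕ) : ℝ) * q i) < 1 := Int.fract_lt_one _
    have hlt : ⌊Int.fract (((k : ℕ) : ℝ) * q i) * (M : ℝ)⌋ < (M : ℤ) := by
      rw [Int.floor_lt]
      push_cast
      nlinarith
    have hge : 0 ≤ ⌊Int.fract (((k : ℕ) : ℝ) * q i) * (M : ℝ)⌋ :=
      Int.floor_nonneg.2 (mul_nonneg (Int.fract_nonneg _) (by positivity))
    omega
  set F : Fin (M ^ m + 1) → (Fin m → Fin M) := fun k i =>
    ⟨(⌊Int.fract ((k : ℕ) * q i) * (M : ℝ)⌋).toNat, hFlt k i⟩ with hF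
  have hcard : Fintype.card (Fin m → Fin M) < Fintype.card (Fin (M ^ m + 1)) := by
    simp
  obtain ⟨x, y, hxy, hFeq⟩ := Fintype.exists_ne_map_eq_of_card_lt F hcard
  suffices h : ∀ x y : Fin (M ^ m + 1), x < y → F x = F y →
      ∃ (k : ℕ) (a : Fin m → ℤ), 1 ≤ k ∧ k ≤ M ^ m ∧
        ∀ i, |(k : ℝ) * q i - (a i : ℝ)| ≤ 1 / (M : ℝ) by
    rcases hxy.lt_or_gt with hlt | hlt
    · exact h x y hlt hFeq
    · exact h y x hlt hFeq.symm
  intro x y hlt hFeq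
  have hxyn : (x : ℕ) < (y : ℕ) := hlt
  refine ⟨(y : ℕ) - (x : ℕ),
    fun i => ⌊((y : ℕ) : ℝ) * q i⌋ - ⌊((x : ℕ) : ℝ) * q i⌋, by omega,
    by have := y.isLt; omega, ?_⟩
  intro i
  have hfl : ⌊Int.fract (((y : ℕ) : ℝ) * q i) * (M : ℝ)⌋
      = ⌊Int.fract (((x : ℕ) : ℝ) * q i) * (M : ℝ)⌋ := by
    have h1 := congrFun hFeq i
    have h2 : (F x i : ℕ) = (F y i : ℕ) := by rw [h1]
    simp only [hF] at h2
    have hge1 : 0 ≤ ⌊Int.fract (((x : ℕ) : ℝ) * q i) * (M : ℝ)⌋ :=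
      Int.floor_nonneg.2 (mul_nonneg (Int.fract_nonneg _) (by positivity))
    have hge2 : 0 ≤ ⌊Int.fract (((y : ℕ) : ℝ) * q i) * (M : ℝ)⌋ :=
      Int.floor_nonneg.2 (mul_nonneg (Int.fract_nonneg _) (by positivity))
    omega
  have habs : |Int.fract (((y : ℕ) : ℝ) * q i) - Int.fract (((x : ℕ) : ℝ) * q i)| < 1 / (M : ℝ) := by
    have h := abs_sub_lt_one_of_floor_eq hfl
    rw [← sub_mul, abs_mul, abs_of_pos hM'] at h
    rw [lt_div_iff₀ hM']
    exact h
  have hrw : ((((y : ℕ) - (x : ℕ) : ℕ) : ℝ)) * q i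
      - ((⌊((y : ℕ) : ℝ) * q i⌋ - ⌊((x : ℕ) : ℝ) * q i⌋ : ℤ) : ℝ)
      = Int.fract (((y : ℕ) : ℝ) * q i) - Int.fract (((x : ℕ) : ℝ) * q i) := by
    rw [Nat.cast_sub hxyn.le]
    simp only [Int.fract]
    push_cast
    ring
  rw [hrw]
  exact habs.le

/-- Gauge of the simplex `conv{e_1, …, e_m, -1}` on a small cube. -/
private lemma gauge_bound (m : ℕ) (hm : 0 < m) (x : Fin m → ℝ) (r : ℝ) (hr : 0 ≤ r)
    (hx : ∀ i, |x i| ≤ r) :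
    gauge (convexHull ℝ
      ((Set.range fun i : Fin m => (Pi.single i 1 : Fin m → ℝ)) ∪ {fun _ => -1})) x
      ≤ (2 * (m : ℝ) - 1) * r := by
  set V : Set (Fin m → ℝ) :=
    (Set.range fun i : Fin m => (Pi.single i 1 : Fin m → ℝ)) ∪ {fun _ => -1} with hV
  have hmr : (1 : ℝ) ≤ (m : ℝ) := by exact_mod_cast hm
  have hne : (Finset.univ : Finset (Fin m)).Nonempty := ⟨⟨0, hm⟩, Finset.mem_univ _⟩
  set ν : ℝ := max 0 (-(Finset.univ.inf' hne x)) with hν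
  have hν0 : 0 ≤ ν := le_max_left _ _
  obtain ⟨i0, _, hi0⟩ := Finset.exists_mem_eq_inf' hne x
  have hνr : ν ≤ r := by
    have h := abs_le.1 (hx i0)
    apply max_le hr
    rw [hi0]
    linarith [h.1]
  have hwnn0 : ∀ i, 0 ≤ x i + ν := by
    intro i
    have h1 : Finset.univ.inf' hne x ≤ x i := Finset.inf'_le _ (Finset.mem_univ i)
    have h2 : -(Finset.univ.inf' hne x) ≤ ν := le_max_right _ _
    linarith
  set R : ℝ := (∑ i, (x i + ν)) + ν with hR
  have hR0 : 0 ≤ R := by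
    have hs : (0 : ℝ) ≤ ∑ i, (x i + ν) := Finset.sum_nonneg (fun i _ => hwnn0 i)
    simp only [hR]; linarith
  have hsumx : ∀ i, x i ≤ r := fun i => (abs_le.1 (hx i)).2
  have hRle : R ≤ (2 * (m : ℝ) - 1) * r := by
    have hRalt : R = (∑ i, x i) + ((m : ℝ) + 1) * ν := by
      rw [hR, Finset.sum_add_distrib, Finset.sum_const, Finset.card_univ, Fintype.card_fin]
      ring
    rcases eq_or_lt_of_le hν0 with hz | hpos
    · have hsum : ∑ i, x i ≤ (m : ℝ) * r := by
        calc ∑ i, x i ≤ ∑ _i : Fin m, r := Finset.sum_le_sum fun i _ => hsumx i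
        _ = (m : ℝ) * r := by simp [mul_comm]
      rw [hRalt, ← hz]
      nlinarith
    · -- ν > 0, so ν = -(inf) = -(x i0)
      have hν_eq : ν = -(x i0) := by
        rw [hν, ← hi0]
        rcases le_or_gt (-(Finset.univ.inf' hne x)) 0 with h | h
        · exfalso; rw [hν] at hpos; rw [max_eq_left h] at hpos; exact lt_irrefl _ hpos
        · exact max_eq_right h.le
      have hsplit : ∑ i, x i = x i0 + ∑ i ∈ Finset.univ.erase i0, x i := by
        rw [Finset.add_sum_erase _ _ (Finset.mem_univ i0)]
      have herase : ∑ i ∈ Finset.univ.erase i0, x i ≤ ((m : ℝ) - 1) * r := by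
        calc ∑ i ∈ Finset.univ.erase i0, x i ≤ ∑ _i ∈ Finset.univ.erase i0, r :=
              Finset.sum_le_sum fun i _ => hsumx i
        _ = ((m : ℝ) - 1) * r := by
              rw [Finset.sum_const, Finset.card_erase_of_mem (Finset.mem_univ i0),
                Finset.card_univ, Fintype.card_fin, nsmul_eq_mul, Nat.cast_sub hm]
              push_cast
              ring
      rw [hRalt, hsplit]
      nlinarith
  rcases eq_or_lt_of_le hR0 with hReq | hRpos
  · -- R = 0 forces x = 0
    have hsum0 : ∑ i, (x i + ν) = 0 ∧ ν = 0 := by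
      have h1 := Finset.sum_nonneg (fun i (_ : i ∈ Finset.univ) => hwnn0 i)
      constructor <;> [skip; skip] <;> simp only [hR] at hReq <;> linarith
    have hxz : x = 0 := by
      funext i
      have := (Finset.sum_eq_zero_iff_of_nonneg (fun i _ => hwnn0 i)).1 hsum0.1 i (Finset.mem_univ i)
      have hνz := hsum0.2
      simp only [Pi.zero_apply]
      linarith
    rw [hxz, gauge_zero]
    nlinarith
  · -- R > 0 : x/R is a convex combination of the vertices
    have hwnn : ∀ j ∈ (Finset.univ : Finset (Option (Fin m))), 0 ≤ (Option.elim j ν fun i => x i + ν) := by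
      intro j _
      cases j with
      | none => exact hν0
      | some i => exact hwnn0 i
    have hwsum : ∑ j : Option (Fin m), (Option.elim j ν fun i => x i + ν) = R := by
      rw [Fintype.sum_option]
      simp only [Option.elim]
      rw [hR]; ring
    have hz : ∀ j ∈ (Finset.univ : Finset (Option (Fin m))),
        (Option.elim j (fun _ => (-1 : ℝ)) fun i => (Pi.single i 1 : Fin m → ℝ)) ∈ V := by
      intro j _
      cases j with
      | none => exact Set.mem_union_right _ rfl
      | some i => exact Set.mem_union_left _ ⟨i, rfl⟩
    have hmem := Finset.centerMass_mem_convexHull (Finset.univ : Finset (Option (Fin m)))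
      hwnn (by rw [hwsum]; exact hRpos) hz
    have hcm : (Finset.univ : Finset (Option (Fin m))).centerMass
        (fun j => Option.elim j ν fun i => x i + ν)
        (fun j => Option.elim j (fun _ => (-1 : ℝ)) fun i => (Pi.single i 1 : Fin m → ℝ))
        = R⁻¹ • x := by
      rw [Finset.centerMass, hwsum]
      congr 1
      rw [Fintype.sum_option]
      funext j
      simp only [Option.elim, Finset.sum_apply, Pi.add_apply, Pi.smul_apply, smul_eq_mul,
        Pi.single_apply]
      rw [Finset.sum_congr rfl (fun i _ => by rw [mul_ite, mul_one, mul_zero])]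
      rw [Finset.sum_ite_eq Finset.univ j fun i => x i + ν]
      simp
    rw [hcm] at hmem
    have hxmem : x ∈ R • convexHull ℝ V := by
      exact ⟨R⁻¹ • x, hmem, smul_inv_smul₀ hRpos.ne' x⟩
    exact le_trans (gauge_le_of_mem hR0 hxmem) hRle

/-- Key numeric inequality: `(1 + 1/(2m))^(m+1) ≤ 2` for `m ≥ 2`. -/
private lemma key_pow (m : ℕ) (hm : 2 ≤ m) : (1 + 1 / (2 * (m : ℝ))) ^ (m + 1) ≤ 2 := by
  rcases eq_or_lt_of_le hm with h | h
  · rw [← h]; norm_num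
  · have hm3 : (3 : ℝ) ≤ (m : ℝ) := by exact_mod_cast h
    have hu0 : (0 : ℝ) < 2 * (m : ℝ) := by linarith
    have h1 : (1 : ℝ) + 1 / (2 * (m : ℝ)) ≤ Real.exp (1 / (2 * (m : ℝ))) := by
      have := Real.add_one_le_exp (1 / (2 * (m : ℝ)))
      linarith
    calc (1 + 1 / (2 * (m : ℝ))) ^ (m + 1)
        ≤ Real.exp (1 / (2 * (m : ℝ))) ^ (m + 1) := by
          apply pow_le_pow_left₀ (by positivity) h1
      _ = Real.exp ((m + 1 : ℕ) * (1 / (2 * (m : ℝ)))) := by rw [Real.exp_nat_mul]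
      _ ≤ Real.exp (Real.log 2) := by
          apply Real.exp_le_exp.2
          have hlog : (0.6931471803 : ℝ) < Real.log 2 := Real.log_two_gt_d9
          have : ((m + 1 : ℕ) : ℝ) * (1 / (2 * (m : ℝ))) ≤ 2 / 3 := by
            rw [mul_one_div, div_le_div_iff₀ hu0 (by norm_num)]
            push_cast
            linarith
          linarith
      _ = 2 := Real.exp_log (by norm_num)

/-- Secant-line bound for `X ^ (m+1)` on `[1, 1 + 1/(2m)]`, `m ≥ 2`. -/
private lemma pow_secant (m : ℕ) (hm : 2 ≤ m) (X : ℝ) (h1 : 1 ≤ X)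
    (h2 : X ≤ 1 + 1 / (2 * (m : ℝ))) :
    X ^ (m + 1) ≤ 1 + 2 * (m : ℝ) * (X - 1) := by
  have hm0 : (0 : ℝ) < (m : ℝ) := by positivity
  set u : ℝ := 1 / (2 * (m : ℝ)) with hu
  have hupos : 0 < u := by positivity
  set lam : ℝ := (X - 1) / u with hlam
  have hlam0 : 0 ≤ lam := div_nonneg (by linarith) hupos.le
  have hlam1 : lam ≤ 1 := (div_le_one hupos).2 (by linarith)
  have hx1 : (1 : ℝ) ∈ Set.Ici (0 : ℝ) := by norm_num
  have hx2 : (1 + u : ℝ) ∈ Set.Ici (0 : ℝ) := by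
    simp only [Set.mem_Ici]; positivity
  have hconv := (convexOn_pow (m + 1)).2 hx1 hx2 (by linarith : (0:ℝ) ≤ 1 - lam) hlam0
    (by ring : (1 - lam) + lam = 1)
  have hXeq : (1 - lam) • (1 : ℝ) + lam • (1 + u) = X := by
    have : lam * u = X - 1 := div_mul_cancel₀ _ hupos.ne'
    simp only [smul_eq_mul]
    nlinarith
  rw [hXeq] at hconv
  have hkey := key_pow m hm
  have hlamu : lam = 2 * (m : ℝ) * (X - 1) := by
    rw [hlam, hu]
    field_simp
  simp only [smul_eq_mul, one_pow, mul_one] at hconv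
  calc X ^ (m + 1) ≤ (1 - lam) + lam * (1 + u) ^ (m + 1) := hconv
    _ ≤ (1 - lam) + lam * 2 := by nlinarith
    _ = 1 + lam := by ring
    _ = 1 + 2 * (m : ℝ) * (X - 1) := by rw [hlamu]

/-- Choice of a good multiple `k` and integer vector `a`. -/
private lemma choose_ka (m : ℕ) (hm : 0 < m) (ε : ℝ) (hε : 0 < ε) (hε1 : ε < 1)
    (q : Fin m → ℝ) :
    ∃ (k : ℕ) (a : Fin m → ℤ) (r : ℝ), 1 ≤ k ∧ 0 ≤ r ∧
      (∀ i, |(k : ℝ) * q i - (a i : ℝ)| ≤ r) ∧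
      (2 * (m : ℝ) - 1) * r + (k : ℝ) * (ε / (2 * (m : ℝ))) ^ (m + 1) ≤ ε := by
  have hm1 : (1 : ℝ) ≤ (m : ℝ) := by exact_mod_cast hm
  set t : ℝ := ε / (2 * (m : ℝ)) with ht
  have htpos : 0 < t := by positivity
  have ht2m : 2 * (m : ℝ) * t = ε := by
    rw [ht]; field_simp
  have hcinv : 2 * (m : ℝ) < 1 / t := by
    rw [lt_div_iff₀ htpos, ht]
    field_simp
    linarith
  rcases Nat.lt_or_ge m 2 with hm2 | hm2
  · -- m = 1 : use Dirichlet's theorem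
    have hm1' : m = 1 := by omega
    subst hm1'
    have hceil2 : 2 ≤ ⌈1 / t⌉₊ := by
      have h1 : ((1 : ℕ) : ℝ) < 1 / t := by push_cast at hcinv ⊢; linarith
      exact Nat.add_one_le_ceil_iff.2 h1
    set M : ℕ := ⌈1 / t⌉₊ - 1 with hM
    have hMpos : 0 < M := by omega
    obtain ⟨j, kz, hkz0, hkzM, hdir⟩ := Real.exists_int_int_abs_mul_sub_le (q 0) hMpos
    have hMcast : (M : ℝ) + 1 = (⌈1 / t⌉₊ : ℝ) := by
      rw [hM]
      have : (1 : ℕ) ≤ ⌈1 / t⌉₊ := by omega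
      push_cast [Nat.cast_sub this]
      ring
    have hMub : (M : ℝ) < 1 / t := by
      have h1 : (⌈1 / t⌉₊ : ℝ) < 1 / t + 1 := Nat.ceil_lt_add_one (by positivity)
      linarith [hMcast]
    have hM1r : 1 / t ≤ (M : ℝ) + 1 := by rw [hMcast]; exact Nat.le_ceil _
    refine ⟨kz.toNat, fun _ => j, 1 / ((M : ℝ) + 1), ?_, by positivity, ?_, ?_⟩
    · omega
    · intro i
      have hi : i = 0 := Subsingleton.elim _ _
      subst hi
      have hcast : ((kz.toNat : ℕ) : ℝ) = (kz : ℝ) := by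
        exact_mod_cast Int.toNat_of_nonneg hkz0.le
      rw [hcast]
      have : (kz : ℝ) * q 0 - (j : ℝ) = (kz : ℝ) * q 0 - (j : ℝ) := rfl
      calc |(kz : ℝ) * q 0 - (j : ℝ)| ≤ 1 / ((M : ℕ) + 1) := hdir
        _ = 1 / ((M : ℝ) + 1) := by norm_num
    · -- (2·1 - 1) · r + k · t² ≤ 2t = ε
      have hr_le : 1 / ((M : ℝ) + 1) ≤ t := by
        rw [div_le_iff₀ (by positivity)]
        calc (1 : ℝ) = t * (1 / t) := by field_simp
          _ ≤ t * ((M : ℝ) + 1) := by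
              apply mul_le_mul_of_nonneg_left hM1r htpos.le
      have hk_le : ((kz.toNat : ℕ) : ℝ) ≤ (M : ℝ) := by
        have : (kz : ℝ) ≤ (M : ℝ) := by exact_mod_cast hkzM
        have hcast : ((kz.toNat : ℕ) : ℝ) = (kz : ℝ) := by
          exact_mod_cast Int.toNat_of_nonneg hkz0.le
        linarith
      have hkt : ((kz.toNat : ℕ) : ℝ) * t ^ (1 + 1) ≤ t := by
        have h1 : ((kz.toNat : ℕ) : ℝ) * t ≤ 1 := by
          calc ((kz.toNat : ℕ) : ℝ) * t ≤ (M : ℝ) * t :=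
                mul_le_mul_of_nonneg_right hk_le htpos.le
            _ ≤ (1 / t) * t := mul_le_mul_of_nonneg_right hMub.le htpos.le
            _ = 1 := by field_simp
        calc ((kz.toNat : ℕ) : ℝ) * t ^ (1 + 1) = (((kz.toNat : ℕ) : ℝ) * t) * t := by ring
          _ ≤ 1 * t := mul_le_mul_of_nonneg_right h1 htpos.le
          _ = t := by ring
      have h2t : 2 * t = ε := by rw [← ht2m]; push_cast; ring
      have : (2 * (1 : ℝ) - 1) * (1 / ((M : ℝ) + 1)) = 1 / ((M : ℝ) + 1) := by ring
      push_cast at hkt ⊢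
      nlinarith
  · -- m ≥ 2
    set M : ℕ := ⌈1 / t⌉₊ with hM
    have hM1 : 1 ≤ M := Nat.one_le_ceil_iff.2 (by positivity)
    obtain ⟨k, a, hk1, hkM, hka⟩ := pigeon m M hM1 q
    have hMr : (0 : ℝ) < (M : ℝ) := by exact_mod_cast hM1
    have hle : 1 / t ≤ (M : ℝ) := Nat.le_ceil _
    have hlt' : (M : ℝ) < 1 / t + 1 := Nat.ceil_lt_add_one (by positivity)
    set X : ℝ := (M : ℝ) * t with hX
    have hX1 : 1 ≤ X := by
      rw [hX]
      calc (1 : ℝ) = (1 / t) * t := by field_simp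
        _ ≤ (M : ℝ) * t := mul_le_mul_of_nonneg_right hle htpos.le
    have hXlt : X < 1 + t := by
      rw [hX]
      calc (M : ℝ) * t < (1 / t + 1) * t := mul_lt_mul_of_pos_right hlt' htpos
        _ = 1 + t := by field_simp
    have htsmall : t < 1 / (2 * (m : ℝ)) := by
      rw [ht, div_lt_div_iff₀ (by positivity) (by positivity)]
      nlinarith
    have hX2 : X ≤ 1 + 1 / (2 * (m : ℝ)) := by linarith
    have hsec := pow_secant m hm2 X hX1 hX2
    have hXpos : (0 : ℝ) < X := lt_of_lt_of_le one_pos hX1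
    have hkR : (k : ℝ) ≤ (M : ℝ) ^ m := by exact_mod_cast hkM
    refine ⟨k, a, 1 / (M : ℝ), hk1, by positivity, hka, ?_⟩
    have expand : ((2 * (m : ℝ) - 1) * (1 / (M : ℝ)) + (M : ℝ) ^ m * t ^ (m + 1)) * X
        = ((2 * (m : ℝ) - 1) + X ^ (m + 1)) * t := by
      rw [hX, mul_pow]
      field_simp
      ring
    have hmain : ((2 * (m : ℝ) - 1) * (1 / (M : ℝ)) + (M : ℝ) ^ m * t ^ (m + 1)) * X
        ≤ (2 * (m : ℝ) * t) * X := by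
      rw [expand]
      calc ((2 * (m : ℝ) - 1) + X ^ (m + 1)) * t ≤ (2 * (m : ℝ) * X) * t := by
            apply mul_le_mul_of_nonneg_right _ htpos.le
            linarith
        _ = (2 * (m : ℝ) * t) * X := by ring
    have hfin : (2 * (m : ℝ) - 1) * (1 / (M : ℝ)) + (M : ℝ) ^ m * t ^ (m + 1)
        ≤ 2 * (m : ℝ) * t := le_of_mul_le_mul_right hmain hXpos
    have hkterm : (k : ℝ) * t ^ (m + 1) ≤ (M : ℝ) ^ m * t ^ (m + 1) :=
      mul_le_mul_of_nonneg_right hkR (by positivity)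
    linarith [ht2m]

/-- Combinatorial form of the paper's Proposition for fibers that are quotients of `ℙ^m`:
if every nonzero `(q,y) ∈ N` with `y` in the nonnegative orthant has
`gauge Δ₀ q + ∑ y_l > ε`, then every nonzero nonnegative `A` in the projection of `N`
satisfies `∑ A_l > δ` with `δ = (ε/(2m))^(m+1)`. -/
theorem stmt_4 (m n : ℕ) (hm : 0 < m) (hn : 0 < n) (ε : ℝ) (hε : 0 < ε)
    (δ : ℝ) (hδ : δ = (ε / (2 * (m : ℝ))) ^ (m + 1))
    (Δ₀ : Set (Fin m → ℝ))
    (hΔ : Δ₀ = convexHull ℝ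
      ((Set.range fun i : Fin m => (Pi.single i 1 : Fin m → ℝ)) ∪ {fun _ => -1}))
    (N : AddSubgroup ((Fin m → ℝ) × (Fin n → ℝ)))
    (hZ : ∀ (a : Fin m → ℤ) (b : Fin n → ℤ),
      ((fun i => (a i : ℝ)), (fun i => (b i : ℝ))) ∈ N)
    (hX : ∀ p ∈ N, p ≠ 0 → (∀ l, 0 ≤ p.2 l) → ε < gauge Δ₀ p.1 + ∑ l, p.2 l) :
    ∀ A : Fin n → ℝ, (∃ q, (q, A) ∈ N) → A ≠ 0 → (∀ l, 0 ≤ A l) → δ < ∑ l, A l := by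
  -- First: ε < 1, by applying hX to (0, e_1).
  have hε1 : ε < 1 := by
    set l0 : Fin n := ⟨0, hn⟩
    have hmem := hZ 0 (Pi.single l0 1)
    have hne : ((fun i => (((0 : Fin m → ℤ) i : ℤ) : ℝ)),
        (fun i => (((Pi.single l0 1 : Fin n → ℤ) i : ℤ) : ℝ))) ≠
        (0 : (Fin m → ℝ) × (Fin n → ℝ)) := by
      intro h
      have h2 := congrFun (congrArg Prod.snd h) l0
      simp [Pi.single_apply] at h2
    have hpos : ∀ l, 0 ≤ (((Pi.single l0 1 : Fin n → ℤ) l : ℤ) : ℝ) := by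
      intro l
      by_cases h : l = l0 <;> simp [Pi.single_apply, h]
    have hXapp := hX _ hmem hne hpos
    have hg : gauge Δ₀ (fun i => (((0 : Fin m → ℤ) i : ℤ) : ℝ)) = 0 := by
      have : (fun i => (((0 : Fin m → ℤ) i : ℤ) : ℝ)) = (0 : Fin m → ℝ) := by
        funext i; simp
      rw [this, gauge_zero]
    have hs : ∑ l, (((Pi.single l0 1 : Fin n → ℤ) l : ℤ) : ℝ) = 1 := by
      rw [Finset.sum_congr rfl (fun l _ => by rw [Pi.single_apply])]
      simp [Finset.sum_ite_eq']
    simp only [hg, hs] at hXapp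
    linarith
  intro A hA hA0 hApos
  obtain ⟨q, hqA⟩ := hA
  by_contra hcon
  push_neg at hcon
  -- hcon : ∑ l, A l ≤ δ
  obtain ⟨k, a, r, hk1, hr0, hka, hfin⟩ := choose_ka m hm ε hε hε1 q
  -- The point p = (k q - a, k A) lies in N.
  set p : (Fin m → ℝ) × (Fin n → ℝ) :=
    ((fun i => (k : ℝ) * q i - (a i : ℝ)), (fun l => (k : ℝ) * A l)) with hp
  have hpmem : p ∈ N := by
    have h1 : k • ((q, A) : (Fin m → ℝ) × (Fin n → ℝ)) ∈ N := AddSubgroup.nsmul_mem N hqA k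
    have h2 := hZ a 0
    have h3 := AddSubgroup.sub_mem N h1 h2
    have hpe : p = k • ((q, A) : (Fin m → ℝ) × (Fin n → ℝ)) -
        ((fun i => ((a i : ℤ) : ℝ)), (fun i => (((0 : Fin n → ℤ) i : ℤ) : ℝ))) := by
      rw [hp]
      apply Prod.ext
      · funext i
        simp [Pi.smul_apply, nsmul_eq_mul]
      · funext l
        simp [Pi.smul_apply, nsmul_eq_mul]
    rw [hpe]
    exact h3
  have hpne : p ≠ 0 := by
    intro h
    apply hA0
    funext l
    have h2 := congrFun (congrArg Prod.snd h) l
    simp only [hp, Prod.snd_zero, Pi.zero_apply] at h2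
    have hkpos : (0 : ℝ) < (k : ℝ) := by exact_mod_cast hk1
    have : A l = 0 := by
      rcases mul_eq_zero.1 h2 with h | h
      · exact absurd h hkpos.ne'
      · exact h
    simpa using this
  have hppos : ∀ l, 0 ≤ p.2 l := by
    intro l
    have hrfl : p.2 l = (k : ℝ) * A l := rfl
    rw [hrfl]
    exact mul_nonneg (by positivity) (hApos l)
  have hXapp := hX p hpmem hpne hppos
  -- Bound the gauge term.
  have hgauge : gauge Δ₀ p.1 ≤ (2 * (m : ℝ) - 1) * r := by
    rw [hΔ]
    exact gauge_bound m hm _ r hr0 (fun i => hka i)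
  -- Bound the sum term.
  have hsum : ∑ l, p.2 l ≤ (k : ℝ) * δ := by
    have : ∑ l, p.2 l = (k : ℝ) * ∑ l, A l := by
      simp only [hp]
      rw [Finset.mul_sum]
    rw [this]
    apply mul_le_mul_of_nonneg_left hcon (by positivity)
  rw [hδ] at hsum
  linarith
end

section
/- Let m be a positive integer and let P_0, P_1, …, P_m ∈ ℤ^m be affinely independent points such that 0 lies in the interior of the simplex Δ = conv{P_0, …, P_m}. Then there exists a constant C > 0 such that for every positive integer n, every real ε > 0, and every additive subgroup N of ℝ^m × ℝ^n containing ℤ^{m+n}, the following holds: if every nonzero element (q, y) ∈ N with y_l ≥ 0 for all l ∈ {1, …, n} satisfies gauge Δ q + Σ_{l=1}^n y_l > ε, then every nonzero element A ∈ π(N) with A_l ≥ 0 for all l satisfies Σ_{l=1}^n A_l > C·ε^{m+1}, where π : ℝ^m × ℝ^n → ℝ^n is the projection to the last n coordinates. -/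
theorem floor_eq_close {x y T : ℝ} (hT : 0 < T) (h : ⌊x * T⌋ = ⌊y * T⌋) :
    |x - y| < 1 / T := by
  have h1 : x * T < ⌊x * T⌋ + 1 := Int.lt_floor_add_one _
  have h2 : (⌊x * T⌋ : ℝ) ≤ x * T := Int.floor_le _
  have h3 : y * T < ⌊y * T⌋ + 1 := Int.lt_floor_add_one _
  have h4 : (⌊y * T⌋ : ℝ) ≤ y * T := Int.floor_le _
  rw [h] at h1 h2
  rw [abs_lt]
  constructor
  · rw [neg_lt, lt_div_iff₀ hT]; nlinarith
  · rw [lt_div_iff₀ hT]; nlinarith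

/-- Combinatorial form of Theorem 2 (fixed fiber): for a fixed lattice simplex
`Δ = conv{P_0, …, P_m}` with `0` in its interior, there is `C > 0` such that for all `n`,
`ε > 0` and lattices `N ⊇ ℤ^{m+n}`, if every nonzero `(q,y) ∈ N` with nonnegative `y`
has `gauge Δ q + ∑ y_l > ε`, then every nonzero nonnegative `A ∈ π(N)` has
`∑ A_l > C·ε^(m+1)`. -/
theorem stmt_5 (m : ℕ) (hm : 0 < m)
    (P : Fin (m + 1) → Fin m → ℤ)
    (hP : AffineIndependent ℝ fun j => fun i => (P j i : ℝ))
    (Δ : Set (Fin m → ℝ))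
    (hΔ : Δ = convexHull ℝ (Set.range fun j => fun i => (P j i : ℝ)))
    (h0 : (0 : Fin m → ℝ) ∈ interior Δ) :
    ∃ C > (0 : ℝ), ∀ n : ℕ, 0 < n → ∀ ε : ℝ, 0 < ε →
      ∀ N : AddSubgroup ((Fin m → ℝ) × (Fin n → ℝ)),
        (∀ (a : Fin m → ℤ) (b : Fin n → ℤ),
          ((fun i => (a i : ℝ)), (fun i => (b i : ℝ))) ∈ N) →
        (∀ p ∈ N, p ≠ 0 → (∀ l, 0 ≤ p.2 l) → ε < gauge Δ p.1 + ∑ l, p.2 l) →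
        ∀ A : Fin n → ℝ, (∃ q, (q, A) ∈ N) → A ≠ 0 → (∀ l, 0 ≤ A l) →
          C * ε ^ (m + 1) < ∑ l, A l := by
  obtain ⟨r, hr, hball⟩ := Metric.mem_nhds_iff.mp (mem_interior_iff_mem_nhds.mp h0)
  set c : ℝ := 2 / r + 1 with hc
  have hcpos : 0 < c := by positivity
  refine ⟨1 / (2 * c ^ m), by positivity, ?_⟩
  intro n hn ε hε N hlat hN A hAq hA0 hAnn
  obtain ⟨q, hqA⟩ := hAq
  -- Step 1: ε < 1, using the integer point (0, e₀) ∈ N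
  have hε1 : ε < 1 := by
    set b : Fin n → ℤ := fun i => if i = ⟨0, hn⟩ then 1 else 0 with hb
    have hmem := hlat 0 b
    have h1 := hN _ hmem ?_ ?_
    · have hgz : (fun i => ((0 : Fin m → ℤ) i : ℝ)) = (0 : Fin m → ℝ) := by
        funext i; simp
      rw [show ((fun i => ((0 : Fin m → ℤ) i : ℝ)), fun i => ((b i : ℝ))).1
          = (fun i => ((0 : Fin m → ℤ) i : ℝ)) from rfl, hgz] at h1
      simp only [gauge_zero, zero_add] at h1
      calc ε < ∑ l, (((fun i => ((b i : ℝ))) : Fin n → ℝ) l) := h1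
        _ = 1 := by simp [hb, Finset.sum_ite_eq']
    · intro hcon
      have h2 := congrFun (congrArg Prod.snd hcon) ⟨0, hn⟩
      simp [hb] at h2
    · intro l
      simp only [hb]
      by_cases h : l = ⟨0, hn⟩ <;> simp [h]
  -- Step 2: choose T
  set T : ℕ := ⌈2 / (r * ε)⌉₊ with hTdef
  have hTpos : 0 < T := Nat.ceil_pos.mpr (by positivity)
  have hTR : (0 : ℝ) < T := by exact_mod_cast hTpos
  have hTge : 2 / (r * ε) ≤ (T : ℝ) := Nat.le_ceil _
  have hTlt : (T : ℝ) < c / ε := by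
    have h1 : (T : ℝ) < 2 / (r * ε) + 1 := Nat.ceil_lt_add_one (by positivity)
    have h2 : (1 : ℝ) ≤ 1 / ε := by rw [le_div_iff₀ hε]; linarith
    have h3 : 2 / (r * ε) + 1 ≤ c / ε := by
      rw [hc, add_div]
      have h4 : (2 / r) / ε = 2 / (r * ε) := by ring
      rw [h4]; linarith
    linarith
  -- floors
  have hfloor_nonneg : ∀ (k : ℕ) (i : Fin m), 0 ≤ ⌊Int.fract ((k : ℝ) * q i) * T⌋ :=
    fun k i => Int.floor_nonneg.mpr (mul_nonneg (Int.fract_nonneg _) hTR.le)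
  have hfloor_lt : ∀ (k : ℕ) (i : Fin m), ⌊Int.fract ((k : ℝ) * q i) * T⌋ < T := by
    intro k i
    have h1 := Int.fract_lt_one ((k : ℝ) * q i)
    have h2 := Int.fract_nonneg ((k : ℝ) * q i)
    have h3 : Int.fract ((k : ℝ) * q i) * T < T := by nlinarith
    exact Int.floor_lt.mpr (by push_cast; exact h3)
  set g : ℕ → (Fin m → Fin T) := fun k i =>
    ⟨(⌊Int.fract ((k : ℝ) * q i) * T⌋).toNat, by
      have h1 := hfloor_lt k i; have h2 := hfloor_nonneg k i; omega⟩ with hg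
  -- main claim
  have main : ∀ j k : ℕ, j < k → k ≤ T ^ m → g j = g k →
      1 / (2 * c ^ m) * ε ^ (m + 1) < ∑ l, A l := by
    intro j k hjk hkT hgeq
    set K : ℕ := k - j with hK
    have hK1 : 1 ≤ K := by omega
    have hKT : K ≤ T ^ m := by omega
    have hKcast : (K : ℝ) = (k : ℝ) - (j : ℝ) := by
      rw [hK, Nat.cast_sub hjk.le]
    set z : Fin m → ℤ := fun i => ⌊(k : ℝ) * q i⌋ - ⌊(j : ℝ) * q i⌋ with hz
    have hclose : ∀ i, |(K : ℝ) * q i - (z i : ℝ)| < 1 / T := by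
      intro i
      have hfe : ⌊Int.fract ((j : ℝ) * q i) * T⌋ = ⌊Int.fract ((k : ℝ) * q i) * T⌋ := by
        have h5 := congrFun hgeq i
        have h1 := hfloor_nonneg j i; have h2 := hfloor_nonneg k i
        simp only [hg, Fin.mk.injEq] at h5
        omega
      have h6 := floor_eq_close hTR hfe
      have heq2 : (K : ℝ) * q i - (z i : ℝ)
          = Int.fract ((k : ℝ) * q i) - Int.fract ((j : ℝ) * q i) := by
        rw [hKcast, hz]
        simp only [Int.fract]
        push_cast
        ring
      rw [heq2, abs_sub_comm]
      exact h6
    set p : (Fin m → ℝ) × (Fin n → ℝ) :=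
      ((fun i => (K : ℝ) * q i - (z i : ℝ)), fun l => (K : ℝ) * A l) with hp
    have hpmem : p ∈ N := by
      have h1 : K • ((q, A) : (Fin m → ℝ) × (Fin n → ℝ)) ∈ N := N.nsmul_mem hqA K
      have h2 := hlat z 0
      have h3 := N.sub_mem h1 h2
      have h4 : K • ((q, A) : (Fin m → ℝ) × (Fin n → ℝ))
          - ((fun i => ((z i : ℝ))), (fun i => (((0 : Fin n → ℤ) i : ℝ)))) = p := by
        rw [hp, Prod.ext_iff]
        constructor
        · funext i
          simp [nsmul_eq_mul]
        · funext l
          simp [nsmul_eq_mul]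
      rw [← h4]
      exact h3
    have hKposR : (0 : ℝ) < (K : ℝ) := by exact_mod_cast hK1
    have hpne : p ≠ 0 := by
      intro h
      apply hA0
      funext l
      have h2 : (K : ℝ) * A l = 0 := congrFun (congrArg Prod.snd h) l
      exact (mul_eq_zero.mp h2).resolve_left (ne_of_gt hKposR)
    have hpnn : ∀ l, 0 ≤ p.2 l := fun l => mul_nonneg (Nat.cast_nonneg K) (hAnn l)
    have hmain := hN p hpmem hpne hpnn
    have hnorm : ‖p.1‖ ≤ 1 / T := by
      rw [pi_norm_le_iff_of_nonneg (by positivity)]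
      intro i
      rw [Real.norm_eq_abs]
      exact (hclose i).le
    have hgauge : gauge Δ p.1 ≤ ε / 2 := by
      have h1 := mul_gauge_le_norm (x := p.1) hball
      have h2 : 1 / (T : ℝ) ≤ r * ε / 2 := by
        rw [div_le_iff₀ hTR]
        rw [div_le_iff₀ (by positivity)] at hTge
        nlinarith
      have h3 : r * gauge Δ p.1 ≤ r * (ε / 2) := by linarith
      exact le_of_mul_le_mul_left h3 hr
    have hsum : ∑ l, p.2 l = (K : ℝ) * ∑ l, A l := by
      simp [hp, Finset.mul_sum]
    have hKle : (K : ℝ) ≤ (T : ℝ) ^ m := by exact_mod_cast hKT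
    have hAsum_nn : 0 ≤ ∑ l, A l := Finset.sum_nonneg fun l _ => hAnn l
    have h5 : ε < ε / 2 + (K : ℝ) * ∑ l, A l := by
      calc ε < gauge Δ p.1 + ∑ l, p.2 l := hmain
        _ ≤ ε / 2 + (K : ℝ) * ∑ l, A l := by rw [hsum]; linarith
    have h6 : ε / 2 < (T : ℝ) ^ m * ∑ l, A l := by
      have h7 := mul_le_mul_of_nonneg_right hKle hAsum_nn
      linarith
    have hsumpos : 0 < ∑ l, A l := by
      have hp1 : (0 : ℝ) < (T : ℝ) ^ m := pow_pos hTR m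
      nlinarith
    have hTε : (T : ℝ) * ε < c := (lt_div_iff₀ hε).mp hTlt
    have hTm : (T : ℝ) ^ m * ε ^ m < c ^ m := by
      have h8 : ((T : ℝ) * ε) ^ m < c ^ m := pow_lt_pow_left₀ hTε (by positivity) hm.ne'
      rw [mul_pow] at h8
      exact h8
    rw [div_mul_eq_mul_div, one_mul, div_lt_iff₀ (by positivity)]
    have e1 := mul_lt_mul_of_pos_right h6 (pow_pos hε m)
    have e2 := mul_lt_mul_of_pos_right hTm hsumpos
    calc ε ^ (m + 1) = 2 * (ε / 2 * ε ^ m) := by rw [pow_succ]; ring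
      _ < 2 * ((T : ℝ) ^ m * (∑ l, A l) * ε ^ m) := by linarith [e1]
      _ = 2 * ((T : ℝ) ^ m * ε ^ m * (∑ l, A l)) := by ring
      _ < 2 * (c ^ m * (∑ l, A l)) := by linarith [e2]
      _ = (∑ l, A l) * (2 * c ^ m) := by ring
  -- pigeonhole
  have hcard : (Finset.univ : Finset (Fin m → Fin T)).card < (Finset.range (T ^ m + 1)).card := by
    rw [Finset.card_univ, Finset.card_range, Fintype.card_fun, Fintype.card_fin,
      Fintype.card_fin]
    omega
  obtain ⟨k₁, hk₁, k₂, hk₂, hne, heq⟩ :=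
    Finset.exists_ne_map_eq_of_card_lt_of_maps_to hcard (fun a _ => Finset.mem_univ (g a))
  rw [Finset.mem_range] at hk₁ hk₂
  rcases hne.lt_or_gt with hlt | hlt
  · exact main k₁ k₂ hlt (by omega) heq
  · exact main k₂ k₁ hlt (by omega) heq.symm
end

section
/- For all positive integers m, n and every real number ε > 0 there exists δ > 0 such that the following holds. Let P_0, P_1, …, P_m ∈ ℤ^m be any affinely independent points such that 0 lies in the interior of the simplex Δ = conv{P_0, …, P_m}, and let N be any additive subgroup of ℝ^m × ℝ^n containing ℤ^{m+n}. If every nonzero element (q, y) ∈ N with y_l ≥ 0 for all l ∈ {1, …, n} satisfies gauge Δ q + Σ_{l=1}^n y_l > ε, then every nonzero element A ∈ π(N) with A_l ≥ 0 for all l satisfies Σ_{l=1}^n A_l > δ, where π : ℝ^m × ℝ^n → ℝ^n is the projection to the last n coordinates. -/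
/-!
Let `β` be the barycentric coordinates of `0` in `Δ = conv (v i)`. First, `ε`-log terminality
bounds every `β i` below by some `c₀ (m, ε) > 0`: if `β i₀` were tiny, a one-sided simultaneous
approximation gives `2 ≤ c ≤ K (m, ε)` with all `Int.fract (c * β i)` small and
`Int.fract (c * β i₀) = c * β i₀`, and then `∑ i, Int.fract (c * β i) • v i` is a nonzero lattice
point of gauge `≤ ε`. Once `β ≥ c₀`, adding a multiple of `∑ i, β i • v i = 0` shows that
`gauge Δ (∑ i, d i • v i) ≤ (m + 1 + 1 / c₀) * max |d i|`. Dirichlet's simultaneous approximation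
of the coordinates of `q` then gives `k ≤ Q ^ (m + 1)` and a lattice point `z` with
`gauge Δ (k • q - z) < ε / 2`, and the hypothesis applied to `k • (q, A) - (z, 0) ∈ N` yields
`ε < ε / 2 + k * ∑ l, A l`.
-/

open Finset Set

theorem Real.exists_nat_forall_abs_mul_sub_int_lt {ι : Type*} [Fintype ι] (x : ι → ℝ)
    {Q : ℕ} (hQ : 0 < Q) :
    ∃ k : ℕ, 0 < k ∧ k ≤ Q ^ Fintype.card ι ∧ ∃ z : ι → ℤ, ∀ i, |k * x i - z i| < 1 / Q := by
  classical
  let cell (j : ℕ) (i : ι) : ℤ := ⌊Int.fract (j * x i) * Q⌋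
  have hcell : MapsTo cell (Finset.range (Q ^ Fintype.card ι + 1))
      (Fintype.piFinset fun _ : ι => Finset.Ico 0 (Q : ℤ) : Set (ι → ℤ)) := by
    intro j _
    simp only [Fintype.coe_piFinset, Set.mem_pi, Set.mem_univ, coe_Ico, Set.mem_Ico, true_implies]
    intro i
    refine ⟨Int.floor_nonneg.2 (by positivity), Int.floor_lt.2 ?_⟩
    push_cast
    exact mul_lt_of_lt_one_left (by positivity) (Int.fract_lt_one _)
  obtain ⟨a, ha, b, hb, hne, hab⟩ := exists_ne_map_eq_of_card_lt_of_maps_to (by simp) hcell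
  wlog hlt : a < b generalizing a b
  · exact this b hb a ha hne.symm hab.symm (hne.lt_or_gt.resolve_left hlt)
  have hbQ := Finset.mem_range.1 hb
  refine ⟨b - a, by omega, by omega, fun i => ⌊b * x i⌋ - ⌊a * x i⌋, fun i => ?_⟩
  have hfloor := Int.abs_sub_lt_one_of_floor_eq_floor (congrFun hab i).symm
  rw [← sub_mul, abs_mul, Nat.abs_cast, ← lt_div_iff₀ (by positivity)] at hfloor
  calc |((b - a : ℕ) : ℝ) * x i - ((⌊b * x i⌋ - ⌊a * x i⌋ : ℤ) : ℝ)|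
      = |Int.fract (b * x i) - Int.fract (a * x i)| := by
        rw [Nat.cast_sub hlt.le, ← Int.self_sub_floor, ← Int.self_sub_floor]
        push_cast
        ring_nf
    _ < 1 / Q := hfloor

theorem gauge_sum_smul_le_sum {ι E : Type*} [Fintype ι] [AddCommGroup E] [Module ℝ E]
    {s : Set E} (hs : Convex ℝ s) {v : ι → E} (hv : ∀ i, v i ∈ s) {t : ι → ℝ}
    (ht : 0 ≤ t) : gauge s (∑ i, t i • v i) ≤ ∑ i, t i := by
  rcases (Fintype.sum_nonneg ht).eq_or_lt with hzero | hpos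
  · rw [eq_comm, Fintype.sum_eq_zero_iff_of_nonneg ht] at hzero
    simp [hzero]
  refine gauge_le_of_mem hpos.le ⟨∑ i, (t i / ∑ j, t j) • v i, ?_, ?_⟩
  · refine hs.sum_mem (fun i _ => div_nonneg (ht i) hpos.le) ?_ fun i _ => hv i
    rw [← Finset.sum_div, div_self hpos.ne']
  · simp only [Finset.smul_sum, smul_smul]
    congr 1 with i
    field_simp

theorem exists_fract_mul_le_of_forall_mem_Icc {ι : Type*} {ε M κ : ℝ} (hε0 : 0 < ε)
    (hε1 : ε ≤ 1) (hκ : 0 < κ) {r : ℕ} (s : Finset ι) (hs : #s ≤ r) (γ : ι → ℝ)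
    (hγ : ∀ i ∈ s, κ ≤ γ i ∧ γ i ≤ 1) :
    ∃ c, M ≤ c ∧ c ≤ ⌈M⌉₊ * ⌈4 / (κ * ε)⌉₊ ^ r + 1 ∧ ∀ i ∈ s, Int.fract (c * γ i) ≤ ε := by
  set S := ⌈M⌉₊
  set Q := ⌈4 / (κ * ε)⌉₊
  have hQ : 0 < Q := Nat.ceil_pos.2 (by positivity)
  have hQinv : (1 : ℝ) / Q ≤ κ * ε / 4 := by
    rw [div_le_iff₀ (by positivity), ← div_le_iff₀' (by positivity), div_div_eq_mul_div, one_mul]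
    exact Nat.le_ceil _
  -- Two-sided approximation of the `S * γ i`, then the shift `ε / 2 * γ i ≥ κ * ε / 2` outweighs
  -- the error `1 / Q ≤ κ * ε / 4` on the negative side.
  obtain ⟨k, hk0, hkQ, z, hz⟩ := Real.exists_nat_forall_abs_mul_sub_int_lt (fun i : s => S * γ i) hQ
  have hkS : (S : ℝ) ≤ k * S := le_mul_of_one_le_left (by positivity) (by exact_mod_cast hk0)
  refine ⟨k * S + ε / 2, by linarith [Nat.le_ceil M], ?_, fun i hi => ?_⟩
  · have hkQ' : (k : ℝ) ≤ Q ^ r := by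
      rw [Fintype.card_coe] at hkQ
      exact_mod_cast hkQ.trans (Nat.pow_le_pow_right hQ hs)
    nlinarith [(Nat.cast_nonneg S : (0 : ℝ) ≤ S)]
  obtain ⟨hκγ, hγ1⟩ := hγ i hi
  have hzi := abs_lt.1 ((hz ⟨i, hi⟩).trans_le hQinv)
  set g := k * (S * γ i) - z ⟨i, hi⟩ + ε / 2 * γ i
  have hg : (k * S + ε / 2) * γ i = z ⟨i, hi⟩ + g := by ring
  have hκε : κ * ε ≤ ε := mul_le_of_le_one_left hε0.le (hκγ.trans hγ1)
  have hg0 : 0 ≤ g := by nlinarith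
  have hgε : g ≤ 3 * ε / 4 := by nlinarith
  rw [hg, Int.fract_intCast_add, Int.fract_eq_self.2 ⟨hg0, by linarith⟩]
  linarith

theorem exists_bound_forall_fract_mul_le (ι : Type*) {ε M : ℝ} (hε0 : 0 < ε)
    (hε1 : ε ≤ 1) (hM : 0 < M) (r : ℕ) :
    ∃ K, M ≤ K ∧ ∀ (s : Finset ι) (γ : ι → ℝ), #s ≤ r → (∀ i ∈ s, 0 < γ i ∧ γ i ≤ 1) →
      ∃ c, M ≤ c ∧ c ≤ K ∧ ∀ i ∈ s, Int.fract (c * γ i) ≤ ε := by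
  classical
  induction r with
  | zero =>
    refine ⟨M, le_rfl, fun s γ hs _ => ⟨M, le_rfl, le_rfl, ?_⟩⟩
    simp [Finset.card_eq_zero.1 (Nat.le_zero.1 hs)]
  | succ r ih =>
    obtain ⟨K, hMK, hK⟩ := ih
    have hK0 : 0 < K := hM.trans_le hMK
    set κ := ε / K
    refine ⟨max K (⌈M⌉₊ * ⌈4 / (κ * ε)⌉₊ ^ (r + 1) + 1), hMK.trans (le_max_left _ _), ?_⟩
    intro s γ hs hγ
    by_cases hlarge : ∀ i ∈ s, κ ≤ γ i
    · obtain ⟨c, hMc, hc, hfract⟩ := exists_fract_mul_le_of_forall_mem_Icc hε0 hε1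
        (by positivity) s hs γ fun i hi => ⟨hlarge i hi, (hγ i hi).2⟩
      exact ⟨c, hMc, hc.trans (le_max_right _ _), hfract⟩
    -- A weight `γ i₀ < ε / K` is harmless for every `c ≤ K`, since then `c * γ i₀ < ε`.
    push Not at hlarge
    obtain ⟨i₀, hi₀, hsmall⟩ := hlarge
    obtain ⟨c, hMc, hcK, hfract⟩ := hK (s.erase i₀) γ
      (by rw [Finset.card_erase_of_mem hi₀]; omega) fun i hi => hγ i (Finset.mem_of_mem_erase hi)
    refine ⟨c, hMc, hcK.trans (le_max_left _ _), fun i hi => ?_⟩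
    rcases eq_or_ne i i₀ with rfl | hne
    · have hc0 : 0 ≤ c * γ i := mul_nonneg (hM.trans_le hMc).le (hγ i hi).1.le
      have hcγ : c * γ i < ε := calc
        c * γ i ≤ K * γ i := mul_le_mul_of_nonneg_right hcK (hγ i hi).1.le
        _ < K * κ := mul_lt_mul_of_pos_left hsmall hK0
        _ = ε := mul_div_cancel₀ ε hK0.ne'
      rw [Int.fract_eq_self.2 ⟨hc0, hcγ.trans_le hε1⟩]
      exact hcγ.le
    · exact hfract i (Finset.mem_erase.2 ⟨hne, hi⟩)

section AffineBasis

variable {ι E : Type*} [Fintype ι] [AddCommGroup E] [Module ℝ E]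

theorem AffineBasis.coord_le_one_of_forall_nonneg (b : AffineBasis ι ℝ E) {x : E}
    (hx : ∀ i, 0 ≤ b.coord i x) (i : ι) : b.coord i x ≤ 1 := by
  rw [← b.sum_coord_apply_eq_one x]
  exact Finset.single_le_sum (fun j _ => hx j) (Finset.mem_univ i)

variable (ι E) in
theorem exists_pos_le_coord_zero {ε : ℝ} (hε : 0 < ε) :
    ∃ c₀ > 0, ∀ (b : AffineBasis ι ℝ E) (L : AddSubgroup E), (∀ i, b i ∈ L) →
      (∀ z ∈ L, z ≠ 0 → ε < gauge (convexHull ℝ (range b)) z) → (∀ i, 0 < b.coord i 0) →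
      ∀ i, c₀ ≤ b.coord i 0 := by
  classical
  set ε' := min ε 1 / (Fintype.card ι + 1)
  have hε' : 0 < ε' := by positivity
  have hε'ε : (Fintype.card ι + 1) * ε' ≤ min ε 1 := by
    rw [mul_div_cancel₀ _ (by positivity)]
  have hε'1 : ε' ≤ 1 := calc
    ε' ≤ (Fintype.card ι + 1) * ε' := le_mul_of_one_le_left hε'.le (by simp)
    _ ≤ 1 := hε'ε.trans (min_le_right ε 1)
  obtain ⟨K, hK2, hK⟩ := exists_bound_forall_fract_mul_le ι hε' hε'1 two_pos (Fintype.card ι)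
  have hK0 : 0 < K := two_pos.trans_le hK2
  refine ⟨ε' / K, by positivity, fun b L hbL hgauge hpos i₀ => ?_⟩
  by_contra! hsmall
  set β : ι → ℝ := fun i => b.coord i 0
  have hβ1 : ∑ i, β i = 1 := b.sum_coord_apply_eq_one 0
  have hβ0 : ∑ i, β i • b i = 0 := b.linear_combination_coord_eq_self 0
  obtain ⟨c, h2c, hcK, hfract⟩ := hK (Finset.univ.erase i₀) β
    ((Finset.card_erase_le).trans (by simp)) fun i _ =>
      ⟨hpos i, b.coord_le_one_of_forall_nonneg (fun j => (hpos j).le) i⟩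
  have hcβ₀ : c * β i₀ < ε' := calc
    c * β i₀ ≤ K * β i₀ := mul_le_mul_of_nonneg_right hcK (hpos i₀).le
    _ < K * (ε' / K) := mul_lt_mul_of_pos_left hsmall hK0
    _ = ε' := mul_div_cancel₀ ε' hK0.ne'
  -- As `∑ i, β i • b i = 0`, `∑ i, t i • b i` lies in `L`. It is nonzero because `t` is not
  -- proportional to `β`: `t i₀ = c * β i₀` while `∑ i, t i ≤ 1 < c`.
  set t : ι → ℝ := fun i => Int.fract (c * β i)
  have hti₀ : t i₀ = c * β i₀ :=
    Int.fract_eq_self.2 ⟨by positivity [hpos i₀], hcβ₀.trans_le hε'1⟩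
  have hsum : ∑ i, t i ≤ min ε 1 := by
    have ht : ∀ i, t i ≤ ε' := fun i => by
      rcases eq_or_ne i i₀ with rfl | hne
      · exact hti₀ ▸ hcβ₀.le
      · exact hfract i (Finset.mem_erase.2 ⟨hne, Finset.mem_univ i⟩)
    calc ∑ i, t i ≤ ∑ _i : ι, ε' := Finset.sum_le_sum fun i _ => ht i
      _ ≤ (Fintype.card ι + 1) * ε' := by
        rw [Finset.sum_const, Finset.card_univ, nsmul_eq_mul]
        linarith
      _ ≤ min ε 1 := hε'ε
  have hL : ∑ i, t i • b i ∈ L := by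
    have : ∑ i, t i • b i = -∑ i, ⌊c * β i⌋ • b i := by
      simp only [t, ← Int.self_sub_floor, sub_smul, Finset.sum_sub_distrib, mul_smul,
        ← Finset.smul_sum, hβ0, smul_zero, zero_sub, Int.cast_smul_eq_zsmul]
    rw [this]
    exact L.neg_mem (L.sum_mem fun i _ => L.zsmul_mem (hbL i) _)
  have hne : ∑ i, t i • b i ≠ 0 := by
    intro h0
    have hprop := b.ind.eq_of_sum_eq_sum (s := Finset.univ) (w₁ := t)
      (w₂ := fun i => (∑ j, t j) * β i)
      (by rw [← Finset.mul_sum, hβ1, mul_one])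
      (by simp only [mul_smul, ← Finset.smul_sum, hβ0, smul_zero, h0]) i₀ (Finset.mem_univ i₀)
    rw [hti₀, mul_left_inj' (hpos i₀).ne'] at hprop
    linarith [min_le_right ε 1]
  have hgauge_le := gauge_sum_smul_le_sum (convex_convexHull ℝ (range b))
    (subset_convexHull ℝ _ <| mem_range_self ·) fun i => Int.fract_nonneg (c * β i)
  linarith [hgauge _ hL hne, min_le_left ε 1]

theorem AffineBasis.gauge_sum_smul_le (b : AffineBasis ι ℝ E) {c₀ D : ℝ} (hc₀ : 0 < c₀)
    (hcoord : ∀ i, c₀ ≤ b.coord i 0) (hD : 0 ≤ D) {d : ι → ℝ} (hd : ∀ i, |d i| ≤ D) :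
    gauge (convexHull ℝ (range b)) (∑ i, d i • b i) ≤ (Fintype.card ι + 1 / c₀) * D := by
  -- Adding a multiple of the relation `∑ i, b.coord i 0 • b i = 0` makes all coefficients `≥ 0`.
  set t : ι → ℝ := fun i => d i + D / c₀ * b.coord i 0
  have hsum : ∑ i, t i • b i = ∑ i, d i • b i := by
    simp only [t, add_smul, Finset.sum_add_distrib, mul_smul, ← Finset.smul_sum,
      b.linear_combination_coord_eq_self 0, smul_zero, add_zero]
  have ht : 0 ≤ t := fun i => by
    have : D ≤ D / c₀ * b.coord i 0 := by
      rw [div_mul_eq_mul_div, le_div_iff₀ hc₀]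
      exact mul_le_mul_of_nonneg_left (hcoord i) hD
    simp only [t, Pi.zero_apply]
    linarith [neg_abs_le (d i), hd i]
  rw [← hsum]
  refine (gauge_sum_smul_le_sum (convex_convexHull ℝ _)
    (subset_convexHull ℝ _ <| mem_range_self ·) ht).trans ?_
  simp only [t, Finset.sum_add_distrib, ← Finset.mul_sum, b.sum_coord_apply_eq_one, mul_one]
  have : ∑ i, d i ≤ Fintype.card ι * D := by
    simpa using Finset.sum_le_sum fun i (_ : i ∈ Finset.univ) => (le_abs_self (d i)).trans (hd i)
  rw [add_mul, one_div_mul_eq_div]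
  linarith

theorem AffineBasis.exists_nsmul_sub_sum_zsmul_gauge_le (b : AffineBasis ι ℝ E) {c₀ : ℝ}
    (hc₀ : 0 < c₀) (hcoord : ∀ i, c₀ ≤ b.coord i 0) (q : E) {Q : ℕ} (hQ : 0 < Q) :
    ∃ k : ℕ, 0 < k ∧ k ≤ Q ^ Fintype.card ι ∧ ∃ z : ι → ℤ,
      gauge (convexHull ℝ (range b)) (k • q - ∑ i, z i • b i) ≤ (Fintype.card ι + 1 / c₀) / Q := by
  obtain ⟨k, hk0, hkQ, z, hz⟩ :=
    Real.exists_nat_forall_abs_mul_sub_int_lt (fun i => b.coord i q) hQ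
  refine ⟨k, hk0, hkQ, z, ?_⟩
  have : k • q - ∑ i, z i • b i = ∑ i, (k * b.coord i q - z i) • b i := by
    conv_lhs => rw [← b.linear_combination_coord_eq_self q]
    simp only [sub_smul, Finset.sum_sub_distrib, mul_smul, ← Finset.smul_sum,
      Nat.cast_smul_eq_nsmul, Int.cast_smul_eq_zsmul]
  rw [this, div_eq_mul_one_div]
  exact b.gauge_sum_smul_le hc₀ hcoord (by positivity) fun i => (hz i).le

theorem AffineBasis.div_lt_sum_of_mem {n : ℕ} (b : AffineBasis ι ℝ E) {c₀ ε : ℝ} (hc₀ : 0 < c₀)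
    (hcoord : ∀ i, c₀ ≤ b.coord i 0)
    {Q : ℕ} (hQ0 : 0 < Q) (hQ : (Fintype.card ι + 1 / c₀) / Q < ε / 2)
    (N : AddSubgroup (E × (Fin n → ℝ))) (hbN : ∀ i, (b i, 0) ∈ N)
    (hN : ∀ p ∈ N, p ≠ 0 → (∀ l, 0 ≤ p.2 l) →
      ε < gauge (convexHull ℝ (range b)) p.1 + ∑ l, p.2 l)
    {q : E} {A : Fin n → ℝ} (hqA : (q, A) ∈ N) (hA0 : A ≠ 0) (hA : ∀ l, 0 ≤ A l) :
    ε / (2 * Q ^ Fintype.card ι) < ∑ l, A l := by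
  obtain ⟨k, hk0, hkQ, z, hgauge⟩ := b.exists_nsmul_sub_sum_zsmul_gauge_le hc₀ hcoord q hQ0
  have hmem : (k • q - ∑ i, z i • b i, k • A) ∈ N := by
    convert N.sub_mem (N.nsmul_mem hqA k)
      (N.sum_mem (t := Finset.univ) fun i _ => N.zsmul_mem (hbN i) (z i)) using 1
    ext <;> simp [Prod.fst_sum, Prod.snd_sum]
  have hlt := hN _ hmem
    (fun h => hA0 <| (smul_eq_zero.1 (congrArg Prod.snd h)).resolve_left hk0.ne')
    fun l => nsmul_nonneg (hA l) k
  have hkQ' : (k : ℝ) ≤ Q ^ Fintype.card ι := by exact_mod_cast hkQ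
  have hsum : ∑ l, (k • A) l = k * ∑ l, A l := by simp [Finset.mul_sum]
  rw [div_lt_iff₀ (by positivity)]
  nlinarith [Finset.sum_nonneg fun l (_ : l ∈ Finset.univ) => hA l]

end AffineBasis

theorem stmt_6_general (m n : ℕ) (ε : ℝ) (hε : 0 < ε) :
    ∃ δ > (0 : ℝ),
      ∀ P : Fin (m + 1) → Fin m → ℤ,
        AffineIndependent ℝ (fun j => fun i => (P j i : ℝ)) →
        (0 : Fin m → ℝ) ∈ interior (convexHull ℝ (Set.range fun j => fun i => (P j i : ℝ))) →
        ∀ N : AddSubgroup ((Fin m → ℝ) × (Fin n → ℝ)),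
          (∀ (a : Fin m → ℤ) (b : Fin n → ℤ),
            ((fun i => (a i : ℝ)), (fun i => (b i : ℝ))) ∈ N) →
          (∀ p ∈ N, p ≠ 0 → (∀ l, 0 ≤ p.2 l) →
            ε < gauge (convexHull ℝ (Set.range fun j => fun i => (P j i : ℝ))) p.1 + ∑ l, p.2 l) →
          ∀ A : Fin n → ℝ, (∃ q, (q, A) ∈ N) → A ≠ 0 → (∀ l, 0 ≤ A l) → δ < ∑ l, A l := by
  obtain ⟨c₀, hc₀, hcoord⟩ := exists_pos_le_coord_zero (Fin (m + 1)) (Fin m → ℝ) hε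
  set Q : ℕ := ⌈2 * (m + 1 + 1 / c₀) / ε⌉₊ + 1
  have hQ : (Fintype.card (Fin (m + 1)) + 1 / c₀) / Q < ε / 2 := by
    have := Nat.lt_of_ceil_lt (Nat.lt_succ_self ⌈2 * (m + 1 + 1 / c₀) / ε⌉₊)
    rw [div_lt_iff₀ hε] at this
    rw [Fintype.card_fin, Nat.cast_add_one, div_lt_iff₀ (by positivity)]
    linarith
  refine ⟨ε / (2 * Q ^ (m + 1)), by positivity, fun P hP hint N hZ hN A ⟨q, hqA⟩ hA0 hA => ?_⟩
  have hspan := affineSpan_eq_top_of_nonempty_interior ⟨0, hint⟩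
  let b : AffineBasis (Fin (m + 1)) ℝ (Fin m → ℝ) := ⟨fun j i => (P j i : ℝ), hP, hspan⟩
  change (0 : Fin m → ℝ) ∈ interior (convexHull ℝ (range b)) at hint
  change ∀ p ∈ N, p ≠ 0 → (∀ l, 0 ≤ p.2 l) → ε < gauge (convexHull ℝ (range b)) p.1 + _ at hN
  have hpos : ∀ j, 0 < b.coord j 0 := by rwa [b.interior_convexHull] at hint
  have hbN : ∀ j, (b j, 0) ∈ N := fun j => by
    have h := hZ (P j) 0
    simp only [Pi.zero_apply, Int.cast_zero] at h
    exact h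
  have hL : ∀ z ∈ N.comap (AddMonoidHom.inl _ _), z ≠ 0 → ε < gauge (convexHull ℝ (range b)) z :=
    fun z hz hz0 => by simpa using hN _ hz (by simp [hz0]) (by simp)
  simpa only [Fintype.card_fin] using
    b.div_lt_sum_of_mem hc₀ (hcoord b _ hbN hL hpos) (Nat.succ_pos _) hQ N hbN hN hqA hA0 hA

/-- Combinatorial form of the main Theorem 1 (toric McKernan conjecture): for all `m, n, ε`
there is `δ > 0`, independent of the lattice simplex `Δ` and the lattice `N`, such that
`ε`-log terminality of `X` implies `δ`-log terminality of `Y`. -/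
theorem stmt_6 (m n : ℕ) (hm : 0 < m) (hn : 0 < n) (ε : ℝ) (hε : 0 < ε) :
    ∃ δ > (0 : ℝ),
      ∀ P : Fin (m + 1) → Fin m → ℤ,
        AffineIndependent ℝ (fun j => fun i => (P j i : ℝ)) →
        (0 : Fin m → ℝ) ∈ interior (convexHull ℝ (Set.range fun j => fun i => (P j i : ℝ))) →
        ∀ N : AddSubgroup ((Fin m → ℝ) × (Fin n → ℝ)),
          (∀ (a : Fin m → ℤ) (b : Fin n → ℤ),
            ((fun i => (a i : ℝ)), (fun i => (b i : ℝ))) ∈ N) →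
          (∀ p ∈ N, p ≠ 0 → (∀ l, 0 ≤ p.2 l) →
            ε < gauge (convexHull ℝ (Set.range fun j => fun i => (P j i : ℝ))) p.1 + ∑ l, p.2 l) →
          ∀ A : Fin n → ℝ, (∃ q, (q, A) ∈ N) → A ≠ 0 → (∀ l, 0 ≤ A l) → δ < ∑ l, A l :=
  stmt_6_general m n ε hε
end

section
/- Let l ≥ 2 be an integer, set r = l⁴ + 1, let N_l be the additive subgroup of ℝ⁴ generated by ℤ⁴ and the point (l/r, l²/r, 1/r, 1/r), and let Δ_l ⊂ ℝ² be the convex hull of (1, 0), (−(l−1), 1) and (−(l−1), −1). Then every nonzero point (q₁, q₂, y₁, y₂) ∈ N_l with y₁ ≥ 0 and y₂ ≥ 0 satisfies gauge Δ_l (q₁, q₂) + y₁ + y₂ ≥ 1/(4l). -/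
/-!
Write a point of `N_l` as `(a, b, c, d) + k • (l, l², 1, 1) / r` with integers `a, b, c, d` and
`0 ≤ k < r`. Then `c, d ≥ 0`, so unless `c = d = 0` the `y`-part alone is at least `1`, and
otherwise it equals `2k/r`. Since `Δ_l` is cut out by `q₁ + l|q₂| ≤ 1` and `-q₁/(l-1) ≤ 1`, the
gauge is at least `max (q₁ + l|q₂|) (-q₁/(l-1))`. For `a ≥ 1` the first term is `≥ 1`; for
`a ≤ -1` the second term together with `2k/r` is `≥ 1/(l-1)`. For `a = 0`, the congruence
`l⁴ ≡ -1 (mod r)` gives `l² r q₂ = r m - k` with `m = l² b + k ∈ ℤ`: either `m ≠ 0` and `l|q₂|` is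
large, or `k = -l² b ≥ l²` and `q₁ = k l / r ≥ l³ / r`.
-/

open Set Filter Topology

noncomputable section

def triangle (L : ℝ) : Set (ℝ × ℝ) :=
  convexHull ℝ {((1 : ℝ), (0 : ℝ)), (-(L - 1), 1), (-(L - 1), -1)}

def triangleGauge (L : ℝ) (x : ℝ × ℝ) : ℝ := max (x.1 + L * |x.2|) (-x.1 / (L - 1))

end

def intPoints : Set ((ℝ × ℝ) × (ℝ × ℝ)) :=
  {p | ∃ a b c d : ℤ, p = (((a : ℝ), (b : ℝ)), ((c : ℝ), (d : ℝ)))}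

theorem le_gauge_of_forall_le_one {E : Type*} [AddCommGroup E] [Module ℝ E] {s : Set E}
    (hs : Absorbent ℝ s) {f : E → ℝ} (hf : ∀ t : ℝ, 0 < t → ∀ x, f (t • x) = t * f x)
    (hfs : ∀ u ∈ s, f u ≤ 1) (x : E) : f x ≤ gauge s x := by
  by_contra! h
  obtain ⟨t, ht, hlt, u, hu, rfl⟩ := exists_lt_of_gauge_lt hs h
  rw [hf t ht] at hlt
  nlinarith [hfs u hu]

theorem AddSubgroup.exists_add_zsmul_of_mem_closure_union_singleton {G : Type*} [AddCommGroup G]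
    {s : Set G} {g x : G} {n : ℤ} (hn : 0 < n) (hng : n • g ∈ closure s)
    (hx : x ∈ closure (s ∪ {g})) : ∃ y ∈ closure s, ∃ k : ℤ, 0 ≤ k ∧ k < n ∧ x = y + k • g := by
  rw [closure_union, mem_sup] at hx
  obtain ⟨y, hy, z, hz, rfl⟩ := hx
  obtain ⟨k, rfl⟩ := mem_closure_singleton.1 hz
  refine ⟨y + (k / n) • n • g, add_mem hy (zsmul_mem hng _), k % n, k.emod_nonneg hn.ne',
    k.emod_lt_of_pos hn, ?_⟩
  rw [add_assoc, smul_smul, ← add_smul, Int.ediv_mul_add_emod]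

theorem mem_intPoints_of_mem_closure {x : (ℝ × ℝ) × (ℝ × ℝ)}
    (hx : x ∈ AddSubgroup.closure intPoints) : x ∈ intPoints := by
  induction hx using AddSubgroup.closure_induction with
  | mem x hx => exact hx
  | zero => exact ⟨0, 0, 0, 0, by simp only [Int.cast_zero]; rfl⟩
  | add x y _ _ hx hy =>
    obtain ⟨a, b, c, d, rfl⟩ := hx
    obtain ⟨a', b', c', d', rfl⟩ := hy
    exact ⟨a + a', b + b', c + c', d + d', by push_cast; rfl⟩
  | neg x _ hx =>
    obtain ⟨a, b, c, d, rfl⟩ := hx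
    exact ⟨-a, -b, -c, -d, by push_cast; rfl⟩

theorem exists_int_of_mem_closure_intPoints_union {l r : ℕ} (hr : 0 < r) {p : (ℝ × ℝ) × (ℝ × ℝ)}
    (hp : p ∈ AddSubgroup.closure
      (intPoints ∪ {(((l : ℝ) / r, (l : ℝ) ^ 2 / r), (1 / (r : ℝ), 1 / (r : ℝ)))})) :
    ∃ a b c d k : ℤ, 0 ≤ k ∧ k < r ∧
      p = (((a : ℝ) + k * (l / r), (b : ℝ) + k * (l ^ 2 / r)),
        ((c : ℝ) + k * (1 / r), (d : ℝ) + k * (1 / r))) := by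
  obtain ⟨y, hy, k, hk, hkr, rfl⟩ :=
    AddSubgroup.exists_add_zsmul_of_mem_closure_union_singleton (n := r) (by omega)
      (by exact AddSubgroup.subset_closure ⟨l, l ^ 2, 1, 1, by simp [field]⟩) hp
  obtain ⟨a, b, c, d, rfl⟩ := mem_intPoints_of_mem_closure hy
  exact ⟨a, b, c, d, k, hk, hkr, by simp only [Prod.smul_mk, Prod.mk_add_mk, zsmul_eq_mul]⟩

theorem Int.nonneg_of_nonneg_add_of_lt_one {c : ℤ} {θ : ℝ} (hθ : θ < 1) (h : 0 ≤ c + θ) :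
    0 ≤ c := by
  by_contra! hc
  have : (c : ℝ) ≤ -1 := by exact_mod_cast Int.le_sub_one_of_lt hc
  linarith

theorem convex_setOf_add_mul_abs_le (L : ℝ) (hL : 0 ≤ L) :
    Convex ℝ {u : ℝ × ℝ | u.1 + L * |u.2| ≤ 1 ∧ 1 - L ≤ u.1} := by
  rintro u ⟨hu, hu'⟩ v ⟨hv, hv'⟩ a b ha hb hab
  have habs : |a * u.2 + b * v.2| ≤ a * |u.2| + b * |v.2| := by
    simpa only [abs_mul, abs_of_nonneg ha, abs_of_nonneg hb] using abs_add_le (a * u.2) (b * v.2)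
  simp only [mem_ofPred_eq, Prod.fst_add, Prod.snd_add, Prod.smul_fst, Prod.smul_snd, smul_eq_mul]
  constructor <;> nlinarith [mul_le_mul_of_nonneg_left habs hL]

theorem triangle_eq (L : ℝ) (hL : 0 < L) :
    triangle L = {u : ℝ × ℝ | u.1 + L * |u.2| ≤ 1 ∧ 1 - L ≤ u.1} := by
  refine Subset.antisymm (convexHull_min ?_ (convex_setOf_add_mul_abs_le L hL.le)) ?_
  · simp only [insert_subset_iff, singleton_subset_iff, mem_ofPred_eq, abs_one, abs_neg, abs_zero]
    refine ⟨⟨?_, ?_⟩, ⟨?_, ?_⟩, ?_, ?_⟩ <;> linarith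
  · rintro u ⟨h₁, h₂⟩
    have hu₂ := abs_le.1 (show |u.2| ≤ (1 - u.1) / L by rw [le_div_iff₀ hL]; linarith)
    -- the barycentric coordinates of `u`
    let w : Fin 3 → ℝ := ![(L - 1 + u.1) / L, ((1 - u.1) / L + u.2) / 2, ((1 - u.1) / L - u.2) / 2]
    let z : Fin 3 → ℝ × ℝ := ![(1, 0), (-(L - 1), 1), (-(L - 1), -1)]
    have hw : ∀ i, 0 ≤ w i := by
      intro i
      fin_cases i <;> simp only [w, Fin.zero_eta, Fin.mk_one, Fin.reduceFinMk, Matrix.cons_val_zero,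
        Matrix.cons_val_one, Matrix.cons_val]
      · exact div_nonneg (by linarith) hL.le
      all_goals linarith
    have hu : u = ∑ i, w i • z i := by
      simp only [w, z, Fin.sum_univ_three, Fin.isValue, Matrix.cons_val, Prod.smul_mk, smul_eq_mul,
        Prod.mk_add_mk]
      ext <;> field_simp <;> ring
    rw [hu]
    refine (convex_convexHull ℝ _).sum_mem (fun i _ ↦ hw i) ?_ (fun i _ ↦ ?_)
    · simp only [w, Fin.sum_univ_three, Fin.isValue, Matrix.cons_val]
      field_simp
      ring
    · exact subset_convexHull ℝ _ (by fin_cases i <;> simp [z])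

theorem triangle_mem_nhds_zero (L : ℝ) (hL : 1 < L) : triangle L ∈ 𝓝 0 := by
  rw [triangle_eq L (by linarith)]
  refine mem_of_superset (IsOpen.mem_nhds ?_ (show (0 : ℝ × ℝ) ∈
    {u : ℝ × ℝ | u.1 + L * |u.2| < 1 ∧ 1 - L < u.1} by simpa using hL)) ?_
  · have hf : Continuous fun u : ℝ × ℝ ↦ u.1 + L * |u.2| := by fun_prop
    exact (isOpen_lt hf continuous_const).inter (isOpen_lt continuous_const continuous_fst)
  · exact fun u hu ↦ ⟨hu.1.le, hu.2.le⟩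

theorem triangleGauge_smul (L : ℝ) {t : ℝ} (ht : 0 < t) (x : ℝ × ℝ) :
    triangleGauge L (t • x) = t * triangleGauge L x := by
  rw [triangleGauge, triangleGauge, mul_max_of_nonneg _ _ ht.le]
  simp only [Prod.smul_fst, Prod.smul_snd, smul_eq_mul, abs_mul, abs_of_pos ht]
  congr 1 <;> ring

theorem triangleGauge_le_gauge (L : ℝ) (hL : 1 < L) (x : ℝ × ℝ) :
    triangleGauge L x ≤ gauge (triangle L) x := by
  refine le_gauge_of_forall_le_one (absorbent_nhds_zero (triangle_mem_nhds_zero L hL))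
    (fun t ht ↦ triangleGauge_smul L ht) (fun u hu ↦ ?_) x
  rw [triangle_eq L (by linarith)] at hu
  exact max_le hu.1 (by rw [div_le_one (by linarith)]; linarith [hu.2])

theorem inv_sub_one_le_triangleGauge_add {L t : ℝ} (hL : 2 ≤ L) (ht : 0 ≤ t) {x : ℝ × ℝ}
    (hx : x.1 ≤ -1 + t * L) : 1 / (L - 1) ≤ triangleGauge L x + 2 * t := by
  have hG : -x.1 ≤ triangleGauge L x * (L - 1) :=
    (div_le_iff₀ (by linarith)).1 (le_max_right _ _)
  rw [div_le_iff₀ (by linarith)]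
  nlinarith

-- `l⁴ ≡ -1 (mod r)` turns `l² r q₂` into `r m - k` with `m = l² b + k`
theorem natCast_mul_abs_eq_abs_sub_div (l : ℕ) {r : ℝ} (hr : r = (l : ℝ) ^ 4 + 1) (b k : ℤ) :
    l * |b + k * (l ^ 2 / r)| = |r * ((l ^ 2 * b + k : ℤ) : ℝ) - k| / (l * r) := by
  rcases Nat.eq_zero_or_pos l with rfl | hl
  · simp
  have hr0 : 0 < r := by rw [hr]; positivity
  have e : (l : ℝ) * (b + k * (l ^ 2 / r)) = (r * ((l ^ 2 * b + k : ℤ) : ℝ) - k) / (l * r) := by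
    rw [hr]; push_cast; field_simp; ring
  rw [← abs_of_nonneg (by positivity : (0 : ℝ) ≤ l * r), ← abs_div, ← e, abs_mul,
    abs_of_nonneg (by positivity : (0 : ℝ) ≤ l)]

theorem inv_four_mul_le_triangleGauge_of_fst_eq (l : ℕ) (hl : 2 ≤ l) {r : ℝ}
    (hr : r = (l : ℝ) ^ 4 + 1) {b k : ℤ} (hk : 0 ≤ k) (hbk : b ≠ 0 ∨ k ≠ 0) :
    1 / (4 * l) ≤ triangleGauge l (k * (l / r), b + k * (l ^ 2 / r)) := by
  have hL : (2 : ℝ) ≤ l := by exact_mod_cast hl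
  have hr0 : 0 < r := by rw [hr]; positivity
  have hkR : (0 : ℝ) ≤ k := by exact_mod_cast hk
  have hG : k * (l / r) + l * |b + k * (l ^ 2 / r)| ≤
      triangleGauge l (k * (l / r), b + k * (l ^ 2 / r)) :=
    le_max_left _ _
  have hq₂ := natCast_mul_abs_eq_abs_sub_div l hr b k
  rcases eq_or_ne (l ^ 2 * b + k) 0 with hm | hm
  · have hlk : (l : ℤ) ^ 2 ≤ k := by
      have hb : b ≤ -1 := by
        have : b ≠ 0 := by rintro rfl; simp_all
        by_contra! h
        nlinarith [show 1 ≤ b by omega, sq_nonneg (l : ℤ)]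
      nlinarith [sq_nonneg (l : ℤ)]
    calc (1 : ℝ) / (4 * l) ≤ (l : ℝ) ^ 2 * (l / r) := by
          rw [hr, div_le_iff₀ (by positivity)]; field_simp
          nlinarith [one_le_pow₀ (n := 4) (by linarith : (1 : ℝ) ≤ l)]
      _ ≤ k * (l / r) := by gcongr; exact_mod_cast hlk
      _ ≤ _ := le_of_add_le_of_nonneg_left hG (by positivity)
  · have hm' : (1 : ℝ) ≤ |((l ^ 2 * b + k : ℤ) : ℝ)| := by exact_mod_cast Int.one_le_abs hm
    have habs : r - k ≤ |r * ((l ^ 2 * b + k : ℤ) : ℝ) - k| := by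
      calc r - k ≤ r * |((l ^ 2 * b + k : ℤ) : ℝ)| - |(k : ℝ)| := by
            rw [abs_of_nonneg hkR]; nlinarith
        _ ≤ _ := by
            rw [← abs_of_pos hr0, ← abs_mul, abs_of_pos hr0]; exact abs_sub_abs_le_abs_sub _ _
    calc (1 : ℝ) / (4 * l) ≤ 1 / l := by gcongr; linarith
      _ ≤ (k * l ^ 2 + (r - k)) / (l * r) := by
          rw [div_le_div_iff₀ (by positivity) (by positivity)]
          nlinarith [mul_nonneg hkR (by nlinarith : (0 : ℝ) ≤ l ^ 2 - 1)]
      _ ≤ (k * l ^ 2 + |r * ((l ^ 2 * b + k : ℤ) : ℝ) - k|) / (l * r) := by gcongr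
      _ = k * (l / r) + l * |b + k * (l ^ 2 / r)| := by rw [hq₂]; field_simp
      _ ≤ _ := hG

theorem inv_four_mul_le_triangleGauge_add (l : ℕ) (hl : 2 ≤ l) {r : ℝ}
    (hr : r = (l : ℝ) ^ 4 + 1) {a b k : ℤ} (hk : 0 ≤ k) (habk : a ≠ 0 ∨ b ≠ 0 ∨ k ≠ 0) :
    1 / (4 * l) ≤ triangleGauge l (a + k * (l / r), b + k * (l ^ 2 / r)) + 2 * (k / r) := by
  have hL : (2 : ℝ) ≤ l := by exact_mod_cast hl
  have ht : 0 ≤ (k : ℝ) / r := div_nonneg (by exact_mod_cast hk) (by rw [hr]; positivity)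
  have hkl : (k : ℝ) * (l / r) = k / r * l := by ring
  rcases lt_trichotomy a 0 with ha | rfl | ha
  · have ha' : (a : ℝ) ≤ -1 := by exact_mod_cast Int.le_sub_one_of_lt ha
    calc (1 : ℝ) / (4 * l) ≤ 1 / (l - 1) := by gcongr <;> linarith
      _ ≤ _ := inv_sub_one_le_triangleGauge_add hL ht (by dsimp only; linarith)
  · have := inv_four_mul_le_triangleGauge_of_fst_eq l hl hr hk (by simpa using habk)
    simpa using add_le_add this (mul_nonneg zero_le_two ht)
  · have ha' : (1 : ℝ) ≤ a := by exact_mod_cast ha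
    calc (1 : ℝ) / (4 * l) ≤ 1 := by rw [div_le_one (by positivity)]; linarith
      _ ≤ a + k * (l / r) + l * |b + k * (l ^ 2 / r)| := by
          rw [hkl]; nlinarith [mul_nonneg ht (by positivity : (0 : ℝ) ≤ l),
            mul_nonneg (by positivity : (0 : ℝ) ≤ l) (abs_nonneg (b + k * ((l : ℝ) ^ 2 / r)))]
      _ ≤ _ := le_add_of_le_of_nonneg (le_max_left _ _) (mul_nonneg zero_le_two ht)

/-- Lower bound on the mld of the total space in the paper's Example: every nonzero point
`(q₁,q₂,y₁,y₂)` of `N_l = ℤ⁴ + ℤ·(l/r, l²/r, 1/r, 1/r)` (`r = l⁴+1`) with `y₁, y₂ ≥ 0`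
satisfies `gauge Δ_l (q₁,q₂) + y₁ + y₂ ≥ 1/(4l)`. -/
theorem stmt_10 (l : ℕ) (hl : 2 ≤ l) (r : ℕ) (hr : r = l ^ 4 + 1)
    (N : AddSubgroup ((ℝ × ℝ) × (ℝ × ℝ)))
    (hN : N = AddSubgroup.closure
      ({p : (ℝ × ℝ) × (ℝ × ℝ) | ∃ a b c d : ℤ, p = (((a : ℝ), (b : ℝ)), ((c : ℝ), (d : ℝ)))} ∪
        {(((l : ℝ) / (r : ℝ), (l : ℝ) ^ 2 / (r : ℝ)), (1 / (r : ℝ), 1 / (r : ℝ)))}))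
    (Δ : Set (ℝ × ℝ))
    (hΔ : Δ = convexHull ℝ
      {((1 : ℝ), (0 : ℝ)), (-((l : ℝ) - 1), 1), (-((l : ℝ) - 1), -1)}) :
    ∀ p ∈ N, p ≠ 0 → 0 ≤ p.2.1 → 0 ≤ p.2.2 →
      1 / (4 * (l : ℝ)) ≤ gauge Δ p.1 + p.2.1 + p.2.2 := by
  subst hN
  obtain rfl : Δ = triangle l := hΔ
  rintro p hp hp0 hy₁ hy₂
  obtain ⟨a, b, c, d, k, hk, hkr, rfl⟩ := exists_int_of_mem_closure_intPoints_union (by omega) hp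
  have hL : (2 : ℝ) ≤ l := by exact_mod_cast hl
  have hrR : (r : ℝ) = (l : ℝ) ^ 4 + 1 := by rw [hr]; push_cast; ring
  have hk' : (0 : ℝ) ≤ k * (1 / r) := by positivity
  have hkr' : (k : ℝ) * (1 / r) < 1 := by
    rw [mul_one_div, div_lt_one (by rw [hrR]; positivity)]; exact_mod_cast hkr
  have hG := triangleGauge_le_gauge l (by linarith) (a + k * (l / r), b + k * (l ^ 2 / r))
  by_cases hcd : c = 0 ∧ d = 0
  · obtain ⟨rfl, rfl⟩ := hcd
    have habk : a ≠ 0 ∨ b ≠ 0 ∨ k ≠ 0 := by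
      by_contra! h
      obtain ⟨rfl, rfl, rfl⟩ := h
      simp at hp0
    have := inv_four_mul_le_triangleGauge_add l hl hrR hk habk
    simp only [Int.cast_zero, zero_add]
    linarith [mul_one_div (k : ℝ) r]
  · have hc := Int.nonneg_of_nonneg_add_of_lt_one hkr' hy₁
    have hd := Int.nonneg_of_nonneg_add_of_lt_one hkr' hy₂
    have hcd' : (1 : ℝ) ≤ c + d := by exact_mod_cast (by omega : 1 ≤ c + d)
    have hl' : 1 / (4 * (l : ℝ)) ≤ 1 := by rw [div_le_one (by positivity)]; linarith
    linarith [gauge_nonneg (s := triangle l) (a + k * (l / r), b + k * (l ^ 2 / r))]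
end

section
/- Let l ≥ 2 be an integer, set r = l⁴ + 1, let N_l be the additive subgroup of ℝ⁴ generated by ℤ⁴ and the point (l/r, l²/r, 1/r, 1/r), and let Δ_l ⊂ ℝ² be the convex hull of (1, 0), (−(l−1), 1) and (−(l−1), −1). Then there exists a nonzero point (q₁, q₂, y₁, y₂) ∈ N_l with y₁ ≥ 0 and y₂ ≥ 0 such that gauge Δ_l (q₁, q₂) + y₁ + y₂ ≤ 2/l. -/
/-- Upper bound on the mld of the total space in the paper's Example: there is a nonzero
point `(q₁,q₂,y₁,y₂)` of `N_l = ℤ⁴ + ℤ·(l/r, l²/r, 1/r, 1/r)` (`r = l⁴+1`) with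
`y₁, y₂ ≥ 0` and `gauge Δ_l (q₁,q₂) + y₁ + y₂ ≤ 2/l`. -/
theorem stmt_11 (l : ℕ) (hl : 2 ≤ l) (r : ℕ) (hr : r = l ^ 4 + 1)
    (N : AddSubgroup ((ℝ × ℝ) × (ℝ × ℝ)))
    (hN : N = AddSubgroup.closure
      ({p : (ℝ × ℝ) × (ℝ × ℝ) | ∃ a b c d : ℤ, p = (((a : ℝ), (b : ℝ)), ((c : ℝ), (d : ℝ)))} ∪
        {(((l : ℝ) / (r : ℝ), (l : ℝ) ^ 2 / (r : ℝ)), (1 / (r : ℝ), 1 / (r : ℝ)))}))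
    (Δ : Set (ℝ × ℝ))
    (hΔ : Δ = convexHull ℝ
      {((1 : ℝ), (0 : ℝ)), (-((l : ℝ) - 1), 1), (-((l : ℝ) - 1), -1)}) :
    ∃ p ∈ N, p ≠ 0 ∧ 0 ≤ p.2.1 ∧ 0 ≤ p.2.2 ∧
      gauge Δ p.1 + p.2.1 + p.2.2 ≤ 2 / (l : ℝ) := by
  set L : ℝ := (l : ℝ) with hLdef
  have hL : (2 : ℝ) ≤ L := by rw [hLdef]; exact_mod_cast hl
  have hL0 : (0 : ℝ) < L := by linarith
  have hrR : (r : ℝ) = L ^ 4 + 1 := by rw [hr]; push_cast; ring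
  have hr0 : (0 : ℝ) < (r : ℝ) := by rw [hrR]; positivity
  have hS : (0 : ℝ) < L ^ 2 + 1 := by positivity
  refine ⟨((L / r, L ^ 2 / r), (1 / r, 1 / r)), ?_, ?_, ?_, ?_, ?_⟩
  · rw [hN]
    exact AddSubgroup.subset_closure (Or.inr rfl)
  · intro h
    have h2 : (1 : ℝ) / r = 0 := congrArg (fun p => p.2.1) h
    have : (1 : ℝ) / r ≠ 0 := by positivity
    exact this h2
  · positivity
  · positivity
  · have ht0 : (0 : ℝ) ≤ L * (L ^ 2 + 1) / (L ^ 4 + 1) := by positivity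
    have hgauge : gauge Δ (L / r, L ^ 2 / r) ≤ L * (L ^ 2 + 1) / (L ^ 4 + 1) := by
      apply gauge_le_of_mem ht0
      rw [Set.mem_smul_set]
      refine ⟨(1 / (L ^ 2 + 1), L / (L ^ 2 + 1)), ?_, ?_⟩
      · rw [hΔ]
        have hv1 : ((1 : ℝ), (0 : ℝ)) ∈ convexHull ℝ
            {((1 : ℝ), (0 : ℝ)), (-(L - 1), 1), (-(L - 1), -1)} :=
          subset_convexHull ℝ _ (by simp)
        have hv2 : (-(L - 1), (1 : ℝ)) ∈ convexHull ℝ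
            {((1 : ℝ), (0 : ℝ)), (-(L - 1), 1), (-(L - 1), -1)} :=
          subset_convexHull ℝ _ (by simp)
        have := (convex_convexHull ℝ
            {((1 : ℝ), (0 : ℝ)), (-(L - 1), 1), (-(L - 1), -1)})
        have hmem := this hv1 hv2
            (a := (L ^ 2 - L + 1) / (L ^ 2 + 1)) (b := L / (L ^ 2 + 1))
            (div_nonneg (by nlinarith) hS.le) (by positivity) (by field_simp; ring)
        convert hmem using 1
        rw [Prod.ext_iff]
        constructor
        · show (1 : ℝ) / (L ^ 2 + 1) =
            ((L ^ 2 - L + 1) / (L ^ 2 + 1)) • (1 : ℝ) + (L / (L ^ 2 + 1)) • (-(L - 1))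
          simp only [smul_eq_mul]
          field_simp
          ring
        · show L / (L ^ 2 + 1) =
            ((L ^ 2 - L + 1) / (L ^ 2 + 1)) • (0 : ℝ) + (L / (L ^ 2 + 1)) • (1 : ℝ)
          simp only [smul_eq_mul]
          ring
      · rw [Prod.ext_iff]
        constructor
        · show (L * (L ^ 2 + 1) / (L ^ 4 + 1)) * (1 / (L ^ 2 + 1)) = L / r
          rw [hrR]; field_simp
        · show (L * (L ^ 2 + 1) / (L ^ 4 + 1)) * (L / (L ^ 2 + 1)) = L ^ 2 / r
          rw [hrR]; field_simp
    have key : L * (L ^ 2 + 1) / (L ^ 4 + 1) + 1 / r + 1 / r ≤ 2 / L := by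
      rw [hrR, div_add_div _ _ (by positivity : (L ^ 4 + 1 : ℝ) ≠ 0) (by positivity),
        div_add_div _ _ (by positivity : ((L ^ 4 + 1) * (L ^ 4 + 1) : ℝ) ≠ 0) (by positivity),
        div_le_div_iff₀ (by positivity) hL0]
      nlinarith [sq_nonneg L, sq_nonneg (L - 1), pow_pos hL0 4, pow_pos hL0 8,
        sq_nonneg (L ^ 2 - 2), sq_nonneg (L ^ 4 - L)]
    calc gauge Δ (L / r, L ^ 2 / r) + 1 / r + 1 / r
        ≤ L * (L ^ 2 + 1) / (L ^ 4 + 1) + 1 / r + 1 / r := by linarith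
      _ ≤ 2 / L := key
end

section
/- For each integer l ≥ 2, set r = l⁴ + 1, let N_l be the additive subgroup of ℝ⁴ generated by ℤ⁴ and (l/r, l²/r, 1/r, 1/r), let Δ_l ⊂ ℝ² be the convex hull of (1, 0), (−(l−1), 1), (−(l−1), −1), and let π : ℝ⁴ → ℝ² be the projection to the last two coordinates. Define m_X(l) = inf{ gauge Δ_l (q₁, q₂) + y₁ + y₂ : (q₁, q₂, y₁, y₂) ∈ N_l, (q₁,q₂,y₁,y₂) ≠ 0, y₁ ≥ 0, y₂ ≥ 0 } and m_Y(l) = inf{ A₁ + A₂ : (A₁, A₂) ∈ π(N_l), (A₁,A₂) ≠ 0, A₁ ≥ 0, A₂ ≥ 0 }. Then for every l ≥ 2 one has m_X(l) ≤ 2/l and m_Y(l) ≤ 512 · m_X(l)⁴. -/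
/-!
The generator `v = (l, l², 1, 1)/r` of `N_l` alone gives `m_X(l) ≤ 2/l` and `m_Y(l) ≤ 2/r`.
Conversely every point of `N_l` is `(P, Q, K, K')/r` with `P ≡ lK`, `Q ≡ l²K`, `K' ≡ K (mod r)`,
and `gauge Δ_l x = max (x₁ + l|x₂|) (-x₁/(l-1))`. If such a point, with `K, K' ≥ 0`, had value
below `1/(4l)`, then `K' - K`, `P - lK` and `Ql² + K` (the latter divisible by `r` because
`l⁴ ≡ -1`) would all be smaller than `r` in absolute value, hence zero; then `K = -Ql²` is a
multiple of `l²` smaller than `l²`, and the point is `0`. So `m_X(l) ≥ 1/(4l)`, and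
`m_Y(l) ≤ 2/r ≤ 2/l⁴ = 512 (1/(4l))⁴ ≤ 512 m_X(l)⁴`.
-/

/-- The lattice `N_l = ℤ⁴ + ℤ·(l/r, l²/r, 1/r, 1/r)` with `r = l⁴ + 1`. -/
def exampleLattice (l : ℕ) : AddSubgroup ((ℝ × ℝ) × (ℝ × ℝ)) :=
  AddSubgroup.closure
    ({p : (ℝ × ℝ) × (ℝ × ℝ) | ∃ a b c d : ℤ, p = (((a : ℝ), (b : ℝ)), ((c : ℝ), (d : ℝ)))} ∪
      {(((l : ℝ) / ((l : ℝ) ^ 4 + 1), (l : ℝ) ^ 2 / ((l : ℝ) ^ 4 + 1)),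
        (1 / ((l : ℝ) ^ 4 + 1), 1 / ((l : ℝ) ^ 4 + 1)))})

/-- The simplex `Δ_l = conv{(1,0), (−(l−1),1), (−(l−1),−1)}`. -/
def exampleSimplex (l : ℕ) : Set (ℝ × ℝ) :=
  convexHull ℝ {((1 : ℝ), (0 : ℝ)), (-((l : ℝ) - 1), 1), (-((l : ℝ) - 1), -1)}

/-- `m_X(l)`: the mld of the total space `X_l`, as the infimum of
`gauge Δ_l (q₁,q₂) + y₁ + y₂` over nonzero points of `N_l` with `y₁, y₂ ≥ 0`. -/
noncomputable def mldX (l : ℕ) : ℝ :=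
  sInf {s : ℝ | ∃ p ∈ exampleLattice l, p ≠ 0 ∧ 0 ≤ p.2.1 ∧ 0 ≤ p.2.2 ∧
    s = gauge (exampleSimplex l) p.1 + p.2.1 + p.2.2}

/-- `m_Y(l)`: the mld of the base `Y_l`, as the infimum of `A₁ + A₂` over nonzero
nonnegative points of the projection of `N_l` to the last two coordinates. -/
noncomputable def mldY (l : ℕ) : ℝ :=
  sInf {s : ℝ | ∃ A : ℝ × ℝ, (∃ q : ℝ × ℝ, (q, A) ∈ exampleLattice l) ∧ A ≠ 0 ∧
    0 ≤ A.1 ∧ 0 ≤ A.2 ∧ s = A.1 + A.2}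

open Pointwise Topology

theorem le_gauge_of_forall_apply_le_one {E : Type*} [AddCommGroup E] [Module ℝ E] {s : Set E}
    (hs : Absorbent ℝ s) (f : E →ₗ[ℝ] ℝ) (hf : ∀ y ∈ s, f y ≤ 1) (x : E) : f x ≤ gauge s x := by
  refine le_csInf hs.gauge_set_nonempty ?_
  rintro r ⟨hr, y, hy, rfl⟩
  rw [map_smul, smul_eq_mul]
  exact mul_le_of_le_one_right (le_of_lt hr) (hf y hy)

theorem Int.ModEq.eq_of_abs_sub_lt {n a b : ℤ} (h : a ≡ b [ZMOD n]) (hab : |(a : ℝ) - b| < n) :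
    a = b := by
  have := Int.eq_zero_of_abs_lt_dvd h.dvd (by rw [abs_sub_comm]; exact_mod_cast hab)
  linarith

section exampleSimplex

variable {l : ℕ}

theorem mem_exampleSimplex (hl : 0 < l) {x : ℝ × ℝ} (h₁ : x.1 + l * |x.2| ≤ 1)
    (h₂ : 1 - l ≤ x.1) : x ∈ exampleSimplex l := by
  have hL : (0 : ℝ) < l := by exact_mod_cast hl
  have hx₂ : |x.2| ≤ (1 - x.1) / l := by rw [le_div_iff₀ hL]; linarith
  set w : Fin 3 → ℝ := ![1 - (1 - x.1) / l, ((1 - x.1) / l + x.2) / 2, ((1 - x.1) / l - x.2) / 2]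
  have hw₀ : ∀ i ∈ Finset.univ, 0 ≤ w i := by
    have : (1 - x.1) / l ≤ 1 := by rw [div_le_one hL]; linarith
    intro i _
    fin_cases i <;> simp only [w, Fin.zero_eta, Fin.mk_one, Fin.reduceFinMk, Matrix.cons_val]
    · linarith
    · linarith [neg_abs_le x.2]
    · linarith [le_abs_self x.2]
  have hw₁ : ∑ i, w i = 1 := by simp only [w, Fin.sum_univ_three, Matrix.cons_val]; ring
  have hx : Finset.univ.centerMass w
      ![((1 : ℝ), (0 : ℝ)), (-((l : ℝ) - 1), 1), (-((l : ℝ) - 1), -1)] = x := by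
    rw [Finset.centerMass_eq_of_sum_1 _ _ hw₁]
    simp only [Fin.sum_univ_three, Matrix.cons_val_zero, Matrix.cons_val_one, Matrix.cons_val,
      Prod.smul_mk, smul_eq_mul, Prod.mk_add_mk, Prod.ext_iff, w]
    constructor
    · field_simp; ring
    · ring
  rw [← hx]
  refine Finset.centerMass_mem_convexHull _ hw₀ (by rw [hw₁]; exact one_pos) fun i _ => ?_
  fin_cases i <;> simp

theorem gauge_exampleSimplex_le (hl : 0 < l) {x : ℝ × ℝ} {t : ℝ} (ht : 0 < t)
    (h₁ : x.1 + l * |x.2| ≤ t) (h₂ : (1 - l) * t ≤ x.1) : gauge (exampleSimplex l) x ≤ t := by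
  refine gauge_le_of_mem ht.le ?_
  rw [← smul_inv_smul₀ ht.ne' x]
  refine Set.smul_mem_smul_set (mem_exampleSimplex hl ?_ ?_)
  · rw [Prod.smul_fst, Prod.smul_snd, smul_eq_mul, smul_eq_mul, abs_mul, abs_inv, abs_of_pos ht]
    rw [← mul_le_mul_iff_of_pos_left ht]
    field_simp
    linarith
  · rw [Prod.smul_fst, smul_eq_mul, le_inv_mul_iff₀ ht]
    linarith

theorem exampleSimplex_mem_nhds (hl : 2 ≤ l) : exampleSimplex l ∈ 𝓝 (0 : ℝ × ℝ) := by
  have hL : (2 : ℝ) ≤ l := by exact_mod_cast hl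
  have hopen : IsOpen ({x : ℝ × ℝ | x.1 + l * |x.2| < 1} ∩ {x | 1 - l < x.1}) :=
    (isOpen_lt (by fun_prop) continuous_const).inter (isOpen_lt continuous_const continuous_fst)
  refine Filter.mem_of_superset (hopen.mem_nhds ⟨by simp, show (1 : ℝ) - l < 0 by linarith⟩) ?_
  rintro x ⟨h₁, h₂⟩
  exact mem_exampleSimplex (by omega) h₁.le h₂.le

theorem apply_le_gauge_exampleSimplex (hl : 2 ≤ l) (f : ℝ × ℝ →ₗ[ℝ] ℝ) (h₁ : f (1, 0) ≤ 1)
    (h₂ : f (-((l : ℝ) - 1), 1) ≤ 1) (h₃ : f (-((l : ℝ) - 1), -1) ≤ 1) (x : ℝ × ℝ) :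
    f x ≤ gauge (exampleSimplex l) x := by
  refine le_gauge_of_forall_apply_le_one (absorbent_nhds_zero (exampleSimplex_mem_nhds hl)) f
    (fun y hy => convexHull_min ?_ (convex_halfSpace_le f.isLinear 1) hy) x
  rintro v (rfl | rfl | rfl) <;> assumption

theorem add_mul_abs_le_gauge_exampleSimplex (hl : 2 ≤ l) (x : ℝ × ℝ) :
    x.1 + l * |x.2| ≤ gauge (exampleSimplex l) x := by
  have hL : (2 : ℝ) ≤ l := by exact_mod_cast hl
  have key (ε : ℝ) (hε : ε = 1 ∨ ε = -1) : x.1 + l * ε * x.2 ≤ gauge (exampleSimplex l) x := by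
    refine apply_le_gauge_exampleSimplex hl (LinearMap.fst ℝ ℝ ℝ + (l * ε) • LinearMap.snd ℝ ℝ ℝ)
      ?_ ?_ ?_ x <;>
    simp only [LinearMap.add_apply, LinearMap.fst_apply, LinearMap.smul_apply,
      LinearMap.snd_apply, smul_eq_mul] <;>
    rcases hε with rfl | rfl <;> linarith
  rcases abs_cases x.2 with ⟨h, -⟩ | ⟨h, -⟩
  · simpa [h, mul_assoc] using key 1 (Or.inl rfl)
  · simpa [h, mul_assoc] using key (-1) (Or.inr rfl)

theorem neg_fst_le_gauge_exampleSimplex (hl : 2 ≤ l) (x : ℝ × ℝ) :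
    -x.1 ≤ (l - 1) * gauge (exampleSimplex l) x := by
  have hL : (1 : ℝ) < l := by exact_mod_cast hl
  have hL' : (0 : ℝ) < l - 1 := by linarith
  have hvertex : -((l - 1 : ℝ)⁻¹ * (1 - l)) ≤ 1 := by field_simp; linarith
  have := apply_le_gauge_exampleSimplex hl (-((l : ℝ) - 1)⁻¹ • LinearMap.fst ℝ ℝ ℝ)
    (by simp only [LinearMap.smul_apply, LinearMap.fst_apply, smul_eq_mul, mul_one]
        linarith [inv_pos.2 hL']) (by simpa) (by simpa) x
  simp only [LinearMap.smul_apply, LinearMap.fst_apply, smul_eq_mul, neg_mul] at this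
  calc -x.1 = (l - 1) * -((l - 1 : ℝ)⁻¹ * x.1) := by field_simp
    _ ≤ (l - 1) * gauge (exampleSimplex l) x := mul_le_mul_of_nonneg_left this hL'.le

end exampleSimplex

section exampleLattice

variable {l : ℕ}

theorem exists_int_of_mem_exampleLattice {p : (ℝ × ℝ) × (ℝ × ℝ)} (hp : p ∈ exampleLattice l) :
    ∃ P Q K K' : ℤ, P ≡ l * K [ZMOD l ^ 4 + 1] ∧ Q ≡ l ^ 2 * K [ZMOD l ^ 4 + 1] ∧
      K' ≡ K [ZMOD l ^ 4 + 1] ∧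
      p = (((P : ℝ) / ((l : ℝ) ^ 4 + 1), (Q : ℝ) / ((l : ℝ) ^ 4 + 1)),
        ((K : ℝ) / ((l : ℝ) ^ 4 + 1), (K' : ℝ) / ((l : ℝ) ^ 4 + 1))) := by
  have hR : (l : ℝ) ^ 4 + 1 ≠ 0 := by positivity
  induction hp using AddSubgroup.closure_induction with
  | mem x hx =>
    rcases hx with ⟨a, b, c, d, rfl⟩ | rfl
    · refine ⟨a * (l ^ 4 + 1), b * (l ^ 4 + 1), c * (l ^ 4 + 1), d * (l ^ 4 + 1),
        Int.modEq_iff_dvd.2 ⟨l * c - a, by ring⟩, Int.modEq_iff_dvd.2 ⟨l ^ 2 * c - b, by ring⟩,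
        Int.modEq_iff_dvd.2 ⟨c - d, by ring⟩, ?_⟩
      push_cast
      simp [hR]
    · exact ⟨l, l ^ 2, 1, 1, by simp [Int.ModEq.refl], by simp [Int.ModEq.refl], rfl, by simp⟩
  | zero =>
    refine ⟨0, 0, 0, 0, by simp [Int.ModEq.refl], by simp [Int.ModEq.refl], rfl, ?_⟩
    simp only [Int.cast_zero, zero_div]
    rfl
  | add x y _ _ hx hy =>
    obtain ⟨P, Q, K, K', hP, hQ, hK', rfl⟩ := hx
    obtain ⟨P₁, Q₁, K₁, K₁', hP₁, hQ₁, hK₁', rfl⟩ := hy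
    refine ⟨P + P₁, Q + Q₁, K + K₁, K' + K₁', ?_, ?_, hK'.add hK₁', ?_⟩
    · rw [mul_add]; exact hP.add hP₁
    · rw [mul_add]; exact hQ.add hQ₁
    · push_cast; simp only [Prod.mk_add_mk, add_div]
  | neg x _ hx =>
    obtain ⟨P, Q, K, K', hP, hQ, hK', rfl⟩ := hx
    refine ⟨-P, -Q, -K, -K', ?_, ?_, hK'.neg, ?_⟩
    · rw [mul_neg]; exact hP.neg
    · rw [mul_neg]; exact hQ.neg
    · push_cast; simp only [Prod.neg_mk, neg_div]

end exampleLattice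

theorem eq_zero_of_modEq_of_four_mul_lt {l : ℕ} (hl : 2 ≤ l) {P Q K K' : ℤ}
    (hP : P ≡ l * K [ZMOD l ^ 4 + 1]) (hQ : Q ≡ l ^ 2 * K [ZMOD l ^ 4 + 1])
    (hK' : K' ≡ K [ZMOD l ^ 4 + 1]) (hK : 0 ≤ K) (hK'₀ : 0 ≤ K') {G : ℝ}
    (hG₁ : P + l * |(Q : ℝ)| ≤ G) (hG₂ : -P ≤ (l - 1) * G)
    (hsmall : 4 * l * (G + K + K') < (l : ℝ) ^ 4 + 1) : P = 0 ∧ Q = 0 ∧ K = 0 ∧ K' = 0 := by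
  have hL : (2 : ℝ) ≤ l := by exact_mod_cast hl
  have hR : (((l : ℤ) ^ 4 + 1 : ℤ) : ℝ) = (l : ℝ) ^ 4 + 1 := by push_cast; ring
  have hKR : (0 : ℝ) ≤ K := by exact_mod_cast hK
  have hK'R : (0 : ℝ) ≤ K' := by exact_mod_cast hK'₀
  have hG : 0 ≤ G := by nlinarith [abs_nonneg (Q : ℝ)]
  have hK'K : K' = K := hK'.eq_of_abs_sub_lt (by rw [hR, abs_lt]; constructor <;> nlinarith)
  have hPK : P = l * K := hP.eq_of_abs_sub_lt (by
    rw [hR, abs_lt]; push_cast; constructor <;> nlinarith [abs_nonneg (Q : ℝ)])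
  have hPKR : (P : ℝ) = l * K := by rw [hPK]; push_cast; ring
  -- `l ^ 4 ≡ -1`, so the congruence for `Q` says `Q l² ≡ -K`
  have hl₄ : l ^ 2 * K * l ^ 2 ≡ -K [ZMOD l ^ 4 + 1] := Int.modEq_iff_dvd.2 ⟨-K, by ring⟩
  have hQK : Q * l ^ 2 = -K := ((hQ.mul_right (l ^ 2)).trans hl₄).eq_of_abs_sub_lt (by
    rw [hR, abs_lt]; push_cast
    constructor <;> nlinarith [abs_nonneg (Q : ℝ), neg_abs_le (Q : ℝ), le_abs_self (Q : ℝ)])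
  have hK0 : K = 0 := by
    refine Int.eq_zero_of_abs_lt_dvd (m := (l : ℤ) ^ 2) ⟨-Q, by linarith⟩ ?_
    rw [abs_of_nonneg hK]
    have : (K : ℝ) < (l : ℝ) ^ 2 := by nlinarith [abs_nonneg (Q : ℝ)]
    exact_mod_cast this
  have hQ0 : Q = 0 := by
    rw [hK0, neg_zero, mul_eq_zero] at hQK
    exact hQK.resolve_right (by positivity)
  exact ⟨by rw [hPK, hK0, mul_zero], hQ0, hK0, by rw [hK'K, hK0]⟩

section mld

variable {l : ℕ}

theorem one_div_four_mul_le_of_mem_exampleLattice (hl : 2 ≤ l) {p : (ℝ × ℝ) × (ℝ × ℝ)}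
    (hp : p ∈ exampleLattice l) (hp₀ : p ≠ 0) (hy₁ : 0 ≤ p.2.1) (hy₂ : 0 ≤ p.2.2) :
    1 / (4 * l) ≤ gauge (exampleSimplex l) p.1 + p.2.1 + p.2.2 := by
  obtain ⟨P, Q, K, K', hP, hQ, hK', rfl⟩ := exists_int_of_mem_exampleLattice hp
  set R : ℝ := (l : ℝ) ^ 4 + 1
  have hR : 0 < R := by positivity
  set G := gauge (exampleSimplex l) ((P : ℝ), (Q : ℝ))
  have hgauge : gauge (exampleSimplex l) ((P : ℝ) / R, (Q : ℝ) / R) = G / R := by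
    have : ((P : ℝ) / R, (Q : ℝ) / R) = R⁻¹ • ((P : ℝ), (Q : ℝ)) := by simp [div_eq_inv_mul]
    rw [this, gauge_smul_of_nonneg (inv_nonneg.2 hR.le), smul_eq_mul, inv_mul_eq_div]
  have hK : (0 : ℝ) ≤ K := by simpa using (le_div_iff₀ hR).1 hy₁
  have hK'₀ : (0 : ℝ) ≤ K' := by simpa using (le_div_iff₀ hR).1 hy₂
  dsimp only
  rw [hgauge, ← add_div, ← add_div, div_le_div_iff₀ (by positivity) hR, one_mul]
  by_contra! hsmall
  obtain ⟨rfl, rfl, rfl, rfl⟩ := eq_zero_of_modEq_of_four_mul_lt hl hP hQ hK'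
    (by exact_mod_cast hK) (by exact_mod_cast hK'₀)
    (add_mul_abs_le_gauge_exampleSimplex hl ((P : ℝ), (Q : ℝ)))
    (neg_fst_le_gauge_exampleSimplex hl ((P : ℝ), (Q : ℝ))) (by linarith)
  exact hp₀ (by simp)

theorem exampleLattice_generator_mem (l : ℕ) :
    ((((l : ℝ) / ((l : ℝ) ^ 4 + 1), (l : ℝ) ^ 2 / ((l : ℝ) ^ 4 + 1)),
      (1 / ((l : ℝ) ^ 4 + 1), 1 / ((l : ℝ) ^ 4 + 1)))) ∈ exampleLattice l :=
  AddSubgroup.subset_closure (Set.mem_union_right _ rfl)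

theorem mldX_le_of_mem {p : (ℝ × ℝ) × (ℝ × ℝ)} (hp : p ∈ exampleLattice l) (hp₀ : p ≠ 0)
    (hy₁ : 0 ≤ p.2.1) (hy₂ : 0 ≤ p.2.2) : mldX l ≤ gauge (exampleSimplex l) p.1 + p.2.1 + p.2.2 :=
  csInf_le ⟨0, by
    rintro s ⟨q, -, -, hq₁, hq₂, rfl⟩
    exact add_nonneg (add_nonneg (gauge_nonneg _) hq₁) hq₂⟩ ⟨p, hp, hp₀, hy₁, hy₂, rfl⟩

theorem mldY_le_of_mem {q A : ℝ × ℝ} (hA : (q, A) ∈ exampleLattice l) (hA₀ : A ≠ 0)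
    (hA₁ : 0 ≤ A.1) (hA₂ : 0 ≤ A.2) : mldY l ≤ A.1 + A.2 :=
  csInf_le ⟨0, by
    rintro s ⟨B, -, -, hB₁, hB₂, rfl⟩
    exact add_nonneg hB₁ hB₂⟩ ⟨A, ⟨q, hA⟩, hA₀, hA₁, hA₂, rfl⟩

theorem gauge_exampleSimplex_generator_le (hl : 0 < l) :
    gauge (exampleSimplex l) ((l : ℝ) / ((l : ℝ) ^ 4 + 1), (l : ℝ) ^ 2 / ((l : ℝ) ^ 4 + 1)) ≤
      ((l : ℝ) ^ 3 + l) / ((l : ℝ) ^ 4 + 1) := by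
  have hL : (1 : ℝ) ≤ l := by exact_mod_cast hl
  refine gauge_exampleSimplex_le hl (by positivity) (le_of_eq ?_) ?_
  · rw [abs_of_nonneg (by positivity)]
    ring
  · exact (mul_nonpos_of_nonpos_of_nonneg (by linarith) (by positivity)).trans (by positivity)

theorem mldX_le_two_div (hl : 2 ≤ l) : mldX l ≤ 2 / l := by
  have hL : (2 : ℝ) ≤ l := by exact_mod_cast hl
  have hR : (0 : ℝ) < 1 / ((l : ℝ) ^ 4 + 1) := by positivity
  calc mldX l ≤ gauge (exampleSimplex l) ((l : ℝ) / ((l : ℝ) ^ 4 + 1),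
          (l : ℝ) ^ 2 / ((l : ℝ) ^ 4 + 1)) + 1 / ((l : ℝ) ^ 4 + 1) + 1 / ((l : ℝ) ^ 4 + 1) :=
        mldX_le_of_mem (exampleLattice_generator_mem l) (fun h => hR.ne' (congrArg (·.2.1) h))
          hR.le hR.le
    _ ≤ ((l : ℝ) ^ 3 + l) / ((l : ℝ) ^ 4 + 1) + 1 / ((l : ℝ) ^ 4 + 1) + 1 / ((l : ℝ) ^ 4 + 1) := by
        gcongr
        exact gauge_exampleSimplex_generator_le (by omega)
    _ ≤ 2 / l := by
        rw [← add_div, ← add_div, div_le_div_iff₀ (by positivity) (by positivity)]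
        have hsq : 2 * (l : ℝ) ≤ l ^ 2 := by nlinarith
        nlinarith [mul_le_mul hsq hsq (by positivity) (by positivity)]

theorem mldY_le_two_div (l : ℕ) : mldY l ≤ 2 / ((l : ℝ) ^ 4 + 1) := by
  have hR : (0 : ℝ) < 1 / ((l : ℝ) ^ 4 + 1) := by positivity
  calc mldY l ≤ 1 / ((l : ℝ) ^ 4 + 1) + 1 / ((l : ℝ) ^ 4 + 1) :=
        mldY_le_of_mem (exampleLattice_generator_mem l) (fun h => hR.ne' (congrArg Prod.fst h))
          hR.le hR.le
    _ = 2 / ((l : ℝ) ^ 4 + 1) := by ring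

theorem one_div_four_mul_le_mldX (hl : 2 ≤ l) : 1 / (4 * l) ≤ mldX l := by
  have hR : (0 : ℝ) < 1 / ((l : ℝ) ^ 4 + 1) := by positivity
  refine le_csInf ⟨_, _, exampleLattice_generator_mem l, fun h => hR.ne' (congrArg (·.2.1) h),
    hR.le, hR.le, rfl⟩ ?_
  rintro s ⟨p, hp, hp₀, hy₁, hy₂, rfl⟩
  exact one_div_four_mul_le_of_mem_exampleLattice hl hp hp₀ hy₁ hy₂

end mld

/-- Combinatorial form of Theorem 3: `m_X(l) ≤ 2/l` while `m_Y(l) ≤ 512 · m_X(l)⁴`. -/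
theorem stmt_12 : ∀ l : ℕ, 2 ≤ l → mldX l ≤ 2 / (l : ℝ) ∧ mldY l ≤ 512 * (mldX l) ^ 4 := by
  intro l hl
  refine ⟨mldX_le_two_div hl, ?_⟩
  calc mldY l ≤ 2 / ((l : ℝ) ^ 4 + 1) := mldY_le_two_div l
    _ ≤ 2 / (l : ℝ) ^ 4 := by gcongr; linarith
    _ = 512 * (1 / (4 * l)) ^ 4 := by ring
    _ ≤ 512 * mldX l ^ 4 := by gcongr; exact one_div_four_mul_le_mldX hl
end
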